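/- arXiv:2512.00353 — 8 statements merged into one kernel-verified Lean document; each statement's English description precedes it below -/
import Mathlib

section
/- Fix γ > 1 and let (w, w̄, r) be a smooth solution of the acoustical-coordinate Euler system on an open set Ω ⊆ ℝ². Define the second-order operator P by P f := −(2κv/(cr)) Lf − 2((v+c)/r) Tf − (κ/c) LLf − 2 LTf − L(κ/c)·Lf (this is μ·□_g f, where □_g is the wave operator of the acoustical metric and μ = cκ). Then on Ω: P w = 2κv²/r² + 2((v−c)/r)·Tw + L(κv/r), and P w̄ = 2κv²/r² − 2((v+c)/r)·Tw̄ + L(κv/r) + 2T(cv/r). -/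
noncomputable section
open Real

/-- Partial derivative in the first (`t`) coordinate: the vector field `L`. -/
def Lder (f : ℝ × ℝ → ℝ) (p : ℝ × ℝ) : ℝ := fderiv ℝ f p (1, 0)
/-- Partial derivative in the second (`u`) coordinate: the vector field `T`. -/
def Tder (f : ℝ × ℝ → ℝ) (p : ℝ × ℝ) : ℝ := fderiv ℝ f p (0, 1)

lemma Lder_congr {f g : ℝ × ℝ → ℝ} {p : ℝ × ℝ} (h : f =ᶠ[nhds p] g) :
    Lder f p = Lder g p := by unfold Lder; rw [h.fderiv_eq]

lemma Tder_congr {f g : ℝ × ℝ → ℝ} {p : ℝ × ℝ} (h : f =ᶠ[nhds p] g) :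
    Tder f p = Tder g p := by unfold Tder; rw [h.fderiv_eq]

lemma Lder_mul {f g : ℝ × ℝ → ℝ} {p : ℝ × ℝ} (hf : DifferentiableAt ℝ f p)
    (hg : DifferentiableAt ℝ g p) :
    Lder (fun q => f q * g q) p = Lder f p * g p + f p * Lder g p := by
  unfold Lder; rw [fderiv_fun_mul hf hg]; simp; ring

lemma Lder_add {f g : ℝ × ℝ → ℝ} {p : ℝ × ℝ} (hf : DifferentiableAt ℝ f p)
    (hg : DifferentiableAt ℝ g p) :
    Lder (fun q => f q + g q) p = Lder f p + Lder g p := by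
  unfold Lder; rw [fderiv_fun_add hf hg]; simp

lemma Lder_neg {f : ℝ × ℝ → ℝ} {p : ℝ × ℝ} :
    Lder (fun q => -(f q)) p = -Lder f p := by
  unfold Lder; rw [fderiv_fun_neg]; simp

lemma Tder_neg {f : ℝ × ℝ → ℝ} {p : ℝ × ℝ} :
    Tder (fun q => -(f q)) p = -Tder f p := by
  unfold Tder; rw [fderiv_fun_neg]; simp

lemma Lder_const_mul {f : ℝ × ℝ → ℝ} {p : ℝ × ℝ} (a : ℝ) (hf : DifferentiableAt ℝ f p) :
    Lder (fun q => a * f q) p = a * Lder f p := by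
  unfold Lder; rw [fderiv_const_mul hf]; simp

lemma contDiffAt_Lder {f : ℝ × ℝ → ℝ} {p : ℝ × ℝ} (hf : ContDiffAt ℝ (⊤ : ℕ∞) f p) :
    ContDiffAt ℝ (⊤ : ℕ∞) (Lder f) p := by
  have h1 : ContDiffAt ℝ (⊤ : ℕ∞) (fderiv ℝ f) p := hf.fderiv_right (by simp)
  exact h1.clm_apply contDiffAt_const

lemma contDiffAt_Tder {f : ℝ × ℝ → ℝ} {p : ℝ × ℝ} (hf : ContDiffAt ℝ (⊤ : ℕ∞) f p) :
    ContDiffAt ℝ (⊤ : ℕ∞) (Tder f) p := by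
  have h1 : ContDiffAt ℝ (⊤ : ℕ∞) (fderiv ℝ f) p := hf.fderiv_right (by simp)
  exact h1.clm_apply contDiffAt_const

lemma clairaut {f : ℝ × ℝ → ℝ} {p : ℝ × ℝ} (hf : ContDiffAt ℝ (⊤ : ℕ∞) f p) :
    Lder (Tder f) p = Tder (Lder f) p := by
  have hsym : IsSymmSndFDerivAt ℝ f p := hf.isSymmSndFDerivAt (by rw [minSmoothness_of_isRCLikeNormedField]; exact WithTop.coe_le_coe.mpr le_top)
  have hd : DifferentiableAt ℝ (fderiv ℝ f) p :=
    (hf.fderiv_right (m := (⊤ : ℕ∞)) (by simp)).differentiableAt (by simp)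
  have key : ∀ u : ℝ × ℝ, fderiv ℝ (fun q => fderiv ℝ f q u) p =
      (fderiv ℝ (fderiv ℝ f) p).flip u := by
    intro u
    have := fderiv_clm_apply (c := fderiv ℝ f) (u := fun _ => u) hd (differentiableAt_const u)
    simpa using this
  unfold Lder Tder
  rw [key (0,1), key (1,0)]
  simpa using hsym (1,0) (0,1)

/-- For a smooth solution `(w, w̄, r)` of the acoustical-coordinate Euler
system (with `c = (γ-1)(w+w̄)/2 > 0`, `v = w̄ - w`, `r > 0`, `κ = -∂ᵤr > 0`, satisfying
`L̄w = -κv/r`, `Lw̄ = -cv/r`, `Lr = v + c`), the operator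
`P f = -(2κv/(cr))Lf - 2((v+c)/r)Tf - (κ/c)LLf - 2LTf - L(κ/c)·Lf` (which is `μ·□_g f`)
satisfies `Pw = 2κv²/r² + 2((v-c)/r)Tw + L(κv/r)` and
`Pw̄ = 2κv²/r² - 2((v+c)/r)Tw̄ + L(κv/r) + 2T(cv/r)`. -/
theorem wave_equations_for_riemann_invariants
    (γ : ℝ) (hγ : 1 < γ)
    (Ω : Set (ℝ × ℝ)) (hΩ : IsOpen Ω)
    (w wb r : ℝ × ℝ → ℝ)
    (hw : ContDiffOn ℝ (⊤ : ℕ∞) w Ω) (hwb : ContDiffOn ℝ (⊤ : ℕ∞) wb Ω) (hr : ContDiffOn ℝ (⊤ : ℕ∞) r Ω)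
    (c v κ : ℝ × ℝ → ℝ)
    (hc : ∀ p, c p = (γ - 1) * (w p + wb p) / 2)
    (hv : ∀ p, v p = wb p - w p)
    (hκ : ∀ p, κ p = - Tder r p)
    (hcpos : ∀ p ∈ Ω, 0 < c p) (hrpos : ∀ p ∈ Ω, 0 < r p) (hκpos : ∀ p ∈ Ω, 0 < κ p)
    (heq1 : ∀ p ∈ Ω, 2 * Tder w p + (κ p / c p) * Lder w p = - κ p * v p / r p)
    (heq2 : ∀ p ∈ Ω, Lder wb p = - c p * v p / r p)
    (heq3 : ∀ p ∈ Ω, Lder r p = v p + c p)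
    (P : (ℝ × ℝ → ℝ) → (ℝ × ℝ → ℝ))
    (hP : ∀ f p, P f p =
      -(2 * κ p * v p / (c p * r p)) * Lder f p
      - 2 * ((v p + c p) / r p) * Tder f p
      - (κ p / c p) * Lder (Lder f) p
      - 2 * Lder (Tder f) p
      - Lder (fun q => κ q / c q) p * Lder f p) :
    (∀ p ∈ Ω, P w p =
        2 * κ p * v p ^ 2 / r p ^ 2 + 2 * ((v p - c p) / r p) * Tder w p
        + Lder (fun q => κ q * v q / r q) p) ∧
    (∀ p ∈ Ω, P wb p =
        2 * κ p * v p ^ 2 / r p ^ 2 - 2 * ((v p + c p) / r p) * Tder wb p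
        + Lder (fun q => κ q * v q / r q) p
        + 2 * Tder (fun q => c q * v q / r q) p) := by
  -- common setup, parameterized over the point
  have setup : ∀ p ∈ Ω,
      c p ≠ 0 ∧ r p ≠ 0 ∧
      DifferentiableAt ℝ (fun q => κ q / c q) p ∧
      DifferentiableAt ℝ (fun q => c q * v q / r q) p ∧
      Lder (fun q => κ q * v q / r q) p =
        Lder (fun q => κ q / c q) p * (c p * v p / r p)
          + (κ p / c p) * Lder (fun q => c q * v q / r q) p := by
    intro p hp
    have hmem : Ω ∈ nhds p := hΩ.mem_nhds hp
    have cw : ContDiffAt ℝ (⊤ : ℕ∞) w p := hw.contDiffAt hmem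
    have cwb : ContDiffAt ℝ (⊤ : ℕ∞) wb p := hwb.contDiffAt hmem
    have cr : ContDiffAt ℝ (⊤ : ℕ∞) r p := hr.contDiffAt hmem
    have hcf : c = fun q => (γ - 1) * (w q + wb q) / 2 := funext hc
    have hvf : v = fun q => wb q - w q := funext hv
    have hκf : κ = fun q => -Tder r q := funext hκ
    have ccd : ContDiffAt ℝ (⊤ : ℕ∞) c p := by
      rw [hcf]; exact (contDiffAt_const.mul (cw.add cwb)).div_const 2
    have vcd : ContDiffAt ℝ (⊤ : ℕ∞) v p := by rw [hvf]; exact cwb.sub cw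
    have κcd : ContDiffAt ℝ (⊤ : ℕ∞) κ p := by rw [hκf]; exact (contDiffAt_Tder cr).neg
    have dc : DifferentiableAt ℝ c p := ccd.differentiableAt (by simp)
    have dv : DifferentiableAt ℝ v p := vcd.differentiableAt (by simp)
    have dκ : DifferentiableAt ℝ κ p := κcd.differentiableAt (by simp)
    have dr' : DifferentiableAt ℝ r p := cr.differentiableAt (by simp)
    have cne : c p ≠ 0 := (hcpos p hp).ne'
    have rne : r p ≠ 0 := (hrpos p hp).ne'
    have hkc : DifferentiableAt ℝ (fun q => κ q / c q) p :=
      (κcd.div ccd cne).differentiableAt (by simp)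
    have hg : DifferentiableAt ℝ (fun q => c q * v q / r q) p :=
      ((ccd.mul vcd).div cr rne).differentiableAt (by simp)
    refine ⟨cne, rne, hkc, hg, ?_⟩
    have hEE : (fun q => κ q * v q / r q) =ᶠ[nhds p]
        (fun q => (κ q / c q) * (c q * v q / r q)) := by
      filter_upwards [hmem] with q hq
      have hcne : c q ≠ 0 := (hcpos q hq).ne'
      rw [div_mul_div_comm, mul_left_comm, mul_div_mul_left _ _ hcne]
    rw [Lder_congr hEE, Lder_mul hkc hg]
  constructor
  · -- w case
    intro p hp
    obtain ⟨cne, rne, hkc, hg, hKVR⟩ := setup p hp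
    have hmem : Ω ∈ nhds p := hΩ.mem_nhds hp
    have cw : ContDiffAt ℝ (⊤ : ℕ∞) w p := hw.contDiffAt hmem
    have dTw : DifferentiableAt ℝ (Tder w) p :=
      (contDiffAt_Tder cw).differentiableAt (by simp)
    have dLw : DifferentiableAt ℝ (Lder w) p :=
      (contDiffAt_Lder cw).differentiableAt (by simp)
    have hF : (fun q => 2 * Tder w q + (κ q / c q) * Lder w q) =ᶠ[nhds p]
        (fun q => -(κ q * v q / r q)) := by
      filter_upwards [hmem] with q hq
      rw [heq1 q hq]; ring
    have key : 2 * Lder (Tder w) p +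
        (Lder (fun q => κ q / c q) p * Lder w p + (κ p / c p) * Lder (Lder w) p) =
        -Lder (fun q => κ q * v q / r q) p := by
      have h := Lder_congr hF
      rw [Lder_add (dTw.const_mul 2) (hkc.fun_mul dLw), Lder_const_mul 2 dTw,
        Lder_mul hkc dLw, Lder_neg] at h
      exact h
    have h1 := heq1 p hp
    have hTw : Tder w p = (- κ p * v p / r p - κ p / c p * Lder w p) / 2 := by linarith
    have halg : -(2 * κ p * v p / (c p * r p)) * Lder w p
        - 2 * ((v p + c p) / r p) * Tder w p =
        2 * κ p * v p ^ 2 / r p ^ 2 + 2 * ((v p - c p) / r p) * Tder w p := by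
      rw [hTw]; field_simp; ring
    rw [hP w p]
    linear_combination halg - key
  · -- wb case
    intro p hp
    obtain ⟨cne, rne, hkc, hg, hKVR⟩ := setup p hp
    have hmem : Ω ∈ nhds p := hΩ.mem_nhds hp
    have cwb : ContDiffAt ℝ (⊤ : ℕ∞) wb p := hwb.contDiffAt hmem
    have hL : Lder wb =ᶠ[nhds p] (fun q => -c q * v q / r q) := by
      filter_upwards [hmem] with q hq; exact heq2 q hq
    have hneg : (fun q : ℝ × ℝ => -c q * v q / r q) = fun q => -(c q * v q / r q) := by
      funext q; ring
    have e1 : Lder (Lder wb) p = -Lder (fun q => c q * v q / r q) p := by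
      rw [Lder_congr hL, hneg, Lder_neg]
    have e2 : Lder (Tder wb) p = -Tder (fun q => c q * v q / r q) p := by
      rw [clairaut cwb, Tder_congr hL, hneg, Tder_neg]
    rw [hP wb p, e1, e2, heq2 p hp, hKVR]
    field_simp
    ring
end
end

section
/- Fix γ > 1 and let (w, w̄, r) be a smooth solution of the acoustical-coordinate Euler system on an open set Ω ⊆ ℝ². Then the following three identities hold on Ω: (i) Tw = −( v/(2r) + Lw/(2c) )·κ; (ii) L(Tw̄) = (γ−1)/2 · ( −2(w̄/r)·Tw̄ + 2(w/r)·Tw − ((w̄² − w²)/r²)·κ ); (iii) Lκ = −((γ+1)/2)·Tw̄ + ((3−γ)/2)·Tw. -/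
noncomputable section

open Real

lemma swap_LT {Ω : Set (ℝ × ℝ)} (hΩ : IsOpen Ω) {f : ℝ × ℝ → ℝ}
    (hf : ContDiffOn ℝ (⊤ : ℕ∞) f Ω) {p : ℝ × ℝ} (hp : p ∈ Ω) :
    Lder (Tder f) p = Tder (Lder f) p := by
  have hct : ContDiffAt ℝ (⊤ : ℕ∞) f p := hf.contDiffAt (hΩ.mem_nhds hp)
  have h1 : ContDiffAt ℝ 1 (fderiv ℝ f) p := hct.fderiv_right (WithTop.coe_le_coe.mpr le_top)
  have hdiff : DifferentiableAt ℝ (fderiv ℝ f) p := h1.differentiableAt one_ne_zero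
  have hsymm : IsSymmSndFDerivAt ℝ f p := hct.isSymmSndFDerivAt (by rw [minSmoothness_of_isRCLikeNormedField]; exact WithTop.coe_le_coe.mpr le_top)
  have e1 : Lder (Tder f) p = fderiv ℝ (fderiv ℝ f) p (1, 0) (0, 1) := by
    have h : Tder f = fun x => (fderiv ℝ f x) ((0 : ℝ), (1:ℝ)) := rfl
    rw [Lder, h, fderiv_clm_apply hdiff (differentiableAt_const _)]
    simp
  have e2 : Tder (Lder f) p = fderiv ℝ (fderiv ℝ f) p (0, 1) (1, 0) := by
    have h : Lder f = fun x => (fderiv ℝ f x) ((1:ℝ), (0:ℝ)) := rfl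
    rw [Tder, h, fderiv_clm_apply hdiff (differentiableAt_const _)]
    simp
  rw [e1, e2, hsymm]

/-- For a smooth solution `(w, w̄, r)` of the acoustical-coordinate Euler
system, the following hold on `Ω`:
(i) `Tw = -(v/(2r) + Lw/(2c))·κ`;
(ii) `L(Tw̄) = ((γ-1)/2)(-2(w̄/r)Tw̄ + 2(w/r)Tw - ((w̄²-w²)/r²)κ)`;
(iii) `Lκ = -((γ+1)/2)Tw̄ + ((3-γ)/2)Tw`. -/
theorem boundary_ode_identities
    (γ : ℝ) (hγ : 1 < γ)
    (Ω : Set (ℝ × ℝ)) (hΩ : IsOpen Ω)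
    (w wb r : ℝ × ℝ → ℝ)
    (hw : ContDiffOn ℝ (⊤ : ℕ∞) w Ω) (hwb : ContDiffOn ℝ (⊤ : ℕ∞) wb Ω) (hr : ContDiffOn ℝ (⊤ : ℕ∞) r Ω)
    (c v κ : ℝ × ℝ → ℝ)
    (hc : ∀ p, c p = (γ - 1) * (w p + wb p) / 2)
    (hv : ∀ p, v p = wb p - w p)
    (hκ : ∀ p, κ p = - Tder r p)
    (hcpos : ∀ p ∈ Ω, 0 < c p) (hrpos : ∀ p ∈ Ω, 0 < r p) (hκpos : ∀ p ∈ Ω, 0 < κ p)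
    (heq1 : ∀ p ∈ Ω, 2 * Tder w p + (κ p / c p) * Lder w p = - κ p * v p / r p)
    (heq2 : ∀ p ∈ Ω, Lder wb p = - c p * v p / r p)
    (heq3 : ∀ p ∈ Ω, Lder r p = v p + c p) :
    (∀ p ∈ Ω, Tder w p = -(v p / (2 * r p) + Lder w p / (2 * c p)) * κ p) ∧
    (∀ p ∈ Ω, Lder (Tder wb) p =
        (γ - 1) / 2 * (- 2 * (wb p / r p) * Tder wb p + 2 * (w p / r p) * Tder w p
          - ((wb p ^ 2 - w p ^ 2) / r p ^ 2) * κ p)) ∧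
    (∀ p ∈ Ω, Lder κ p = -((γ + 1) / 2) * Tder wb p + ((3 - γ) / 2) * Tder w p) := by
  refine ⟨?_, ?_, ?_⟩
  · intro p hp
    have hc0 : c p ≠ 0 := (hcpos p hp).ne'
    have hr0 : r p ≠ 0 := (hrpos p hp).ne'
    have h := heq1 p hp
    field_simp at h ⊢
    linarith
  · intro p hp
    have hr0 : r p ≠ 0 := (hrpos p hp).ne'
    have hwd : DifferentiableAt ℝ w p :=
      (hw.contDiffAt (hΩ.mem_nhds hp)).differentiableAt (by simp)
    have hwbd : DifferentiableAt ℝ wb p :=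
      (hwb.contDiffAt (hΩ.mem_nhds hp)).differentiableAt (by simp)
    have hrd : DifferentiableAt ℝ r p :=
      (hr.contDiffAt (hΩ.mem_nhds hp)).differentiableAt (by simp)
    set F : ℝ × ℝ → ℝ := fun q => -((γ-1)/2) * (wb q * wb q - w q * w q) * (r q)⁻¹ with hF
    have hev : Lder wb =ᶠ[nhds p] F := by
      filter_upwards [hΩ.mem_nhds hp] with q hq
      rw [heq2 q hq, hc, hv, hF]; ring
    have hswap := swap_LT hΩ hwb hp
    have hN : HasFDerivAt (fun q => -((γ-1)/2) * (wb q * wb q - w q * w q))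
        ((-((γ-1)/2)) • ((wb p • fderiv ℝ wb p + wb p • fderiv ℝ wb p)
          - (w p • fderiv ℝ w p + w p • fderiv ℝ w p))) p :=
      ((hwbd.hasFDerivAt.mul hwbd.hasFDerivAt).sub
        (hwd.hasFDerivAt.mul hwd.hasFDerivAt)).const_mul (-((γ-1)/2))
    have hI : HasFDerivAt (fun q => (r q)⁻¹)
        ((ContinuousLinearMap.smulRight (1 : ℝ →L[ℝ] ℝ) (-(r p ^ 2)⁻¹)).comp
          (fderiv ℝ r p)) p :=
      (hasFDerivAt_inv hr0).comp p hrd.hasFDerivAt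
    have hFd : HasFDerivAt F _ p := hN.mul hI
    have hTF : Tder (Lder wb) p = Tder F p := by
      rw [Tder, Tder, hev.fderiv_eq]
    have hκp : Tder r p = - κ p := by rw [hκ]; ring
    rw [hswap, hTF, Tder, hFd.fderiv]
    simp only [ContinuousLinearMap.add_apply, ContinuousLinearMap.smul_apply,
      ContinuousLinearMap.sub_apply, ContinuousLinearMap.comp_apply,
      ContinuousLinearMap.smulRight_apply, ContinuousLinearMap.one_apply, smul_eq_mul]
    have e1 : fderiv ℝ wb p (0,1) = Tder wb p := rfl
    have e2 : fderiv ℝ w p (0,1) = Tder w p := rfl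
    have e3 : fderiv ℝ r p (0,1) = Tder r p := rfl
    rw [e1, e2, e3, hκp]
    field_simp
    ring
  · intro p hp
    have hwd : DifferentiableAt ℝ w p :=
      (hw.contDiffAt (hΩ.mem_nhds hp)).differentiableAt (by simp)
    have hwbd : DifferentiableAt ℝ wb p :=
      (hwb.contDiffAt (hΩ.mem_nhds hp)).differentiableAt (by simp)
    set G : ℝ × ℝ → ℝ := fun q => (wb q - w q) + ((γ-1)/2) * (w q + wb q) with hG
    have hev : Lder r =ᶠ[nhds p] G := by
      filter_upwards [hΩ.mem_nhds hp] with q hq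
      rw [heq3 q hq, hc, hv, hG]; ring
    have hκfun : κ = fun q => - Tder r q := funext hκ
    have h1 : Lder κ p = - Lder (Tder r) p := by
      rw [hκfun, Lder, Lder, fderiv_fun_neg]; simp
    have hswap := swap_LT hΩ hr hp
    have hTG : Tder (Lder r) p = Tder G p := by
      rw [Tder, Tder, hev.fderiv_eq]
    have hGd : HasFDerivAt G
        ((fderiv ℝ wb p - fderiv ℝ w p) +
          ((γ-1)/2) • (fderiv ℝ w p + fderiv ℝ wb p)) p :=
      (hwbd.hasFDerivAt.sub hwd.hasFDerivAt).add
        ((hwd.hasFDerivAt.add hwbd.hasFDerivAt).const_mul ((γ-1)/2))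
    rw [h1, hswap, hTG, Tder, hGd.fderiv]
    simp only [ContinuousLinearMap.add_apply, ContinuousLinearMap.sub_apply,
      ContinuousLinearMap.smul_apply, smul_eq_mul]
    have e1 : fderiv ℝ wb p (0,1) = Tder wb p := rfl
    have e2 : fderiv ℝ w p (0,1) = Tder w p := rfl
    rw [e1, e2]
    ring
end
end

section
/- Let γ > 1 and let c, v, r : Ω → ℝ be smooth on an open set Ω ⊆ ℝ² with coordinates (t,u), with c > 0, r > 0, κ := −∂_u r > 0, and ∂_t r = v + c. Write Lf := ∂_t f, Tf := ∂_u f, L̄f := 2Tf + (κ/c)Lf, μ := cκ, tr χ := 2(v+c)/r, tr χ̄ := 2(κ/c)(v−c)/r. Let ψ, a, b : Ω → ℝ be smooth and set ρ̃ := (1/μ)·( −(2κv/(cr)) Lψ − 2((v+c)/r) Tψ − (κ/c) LLψ − 2 LTψ − L(κ/c)·Lψ ) (so that □_g ψ = ρ̃ for the acoustical metric). For a rectangle [t₁,t₂]×[u₁,u₂] ⊆ Ω define the energy E^{[u₁,u₂]}(t) := ∫_{u₁}^{u₂} 4π r(t,u)² · ½ ( b·|L̄ψ|² + a·(κ/c)·|Lψ|²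 ) du, the flux F^{[t₁,t₂]}(u) := ∫_{t₁}^{t₂} 4π r(t,u)² · a·|Lψ|² dt, and Q := Q₀ + Q₁ + Q₂ + Q₃ with Q₀ := −ρ̃·(a·Lψ + b·L̄ψ), Q₁ := (1/(2μ))·Lb·|L̄ψ|², Q₂ := (1/(2μ))·( L̄a − a·L(κ/c) )·|Lψ|², Q₃ := −(1/(2μ))·( a·tr χ + b·tr χ̄ )·Lψ·L̄ψ. Then the energy identity holds: E^{[u₁,u₂]}(t₂) − E^{[u₁,u₂]}(t₁) + F^{[t₁,t₂]}(u₂) − F^{[t₁,t₂]}(u₁) = ∫_{t₁}^{t₂} ∫_{u₁}^{u₂} 4π r² μ Q du dt. -/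
noncomputable section

open Real MeasureTheory

/-! ### Auxiliary lemmas -/

lemma hasDerivAt_fst_slice {g : ℝ × ℝ → ℝ} {p : ℝ × ℝ} (hg : DifferentiableAt ℝ g p) :
    HasDerivAt (fun t => g (t, p.2)) (Lder g p) p.1 := by
  have h1 : HasDerivAt (fun t : ℝ => ((t, p.2) : ℝ × ℝ)) ((1 : ℝ), (0 : ℝ)) p.1 :=
    (hasDerivAt_id p.1).prodMk (hasDerivAt_const p.1 p.2)
  have h2 := hg.hasFDerivAt.comp_hasDerivAt (f := fun t : ℝ => ((t, p.2) : ℝ × ℝ))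
    (x := p.1) h1
  exact h2

lemma hasDerivAt_snd_slice {g : ℝ × ℝ → ℝ} {p : ℝ × ℝ} (hg : DifferentiableAt ℝ g p) :
    HasDerivAt (fun u => g (p.1, u)) (Tder g p) p.2 := by
  have h1 : HasDerivAt (fun u : ℝ => ((p.1, u) : ℝ × ℝ)) ((0 : ℝ), (1 : ℝ)) p.2 :=
    (hasDerivAt_const p.2 p.1).prodMk (hasDerivAt_id p.2)
  have h2 := hg.hasFDerivAt.comp_hasDerivAt (f := fun u : ℝ => ((p.1, u) : ℝ × ℝ))
    (x := p.2) h1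
  exact h2

lemma contDiffOn_Lder {g : ℝ × ℝ → ℝ} {Ω : Set (ℝ × ℝ)} (hΩ : IsOpen Ω)
    (hg : ContDiffOn ℝ (⊤ : ℕ∞) g Ω) : ContDiffOn ℝ (⊤ : ℕ∞) (Lder g) Ω :=
  (hg.fderiv_of_isOpen hΩ (by simp)).clm_apply contDiffOn_const

lemma contDiffOn_Tder {g : ℝ × ℝ → ℝ} {Ω : Set (ℝ × ℝ)} (hΩ : IsOpen Ω)
    (hg : ContDiffOn ℝ (⊤ : ℕ∞) g Ω) : ContDiffOn ℝ (⊤ : ℕ∞) (Tder g) Ω :=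
  (hg.fderiv_of_isOpen hΩ (by simp)).clm_apply contDiffOn_const

lemma Tder_Lder_comm {g : ℝ × ℝ → ℝ} {Ω : Set (ℝ × ℝ)} (hΩ : IsOpen Ω)
    (hg : ContDiffOn ℝ (⊤ : ℕ∞) g Ω) {p : ℝ × ℝ} (hp : p ∈ Ω) :
    Tder (Lder g) p = Lder (Tder g) p := by
  have hat : ContDiffAt ℝ (⊤ : ℕ∞) g p := hg.contDiffAt (hΩ.mem_nhds hp)
  have hd : DifferentiableAt ℝ (fderiv ℝ g) p :=
    (hat.fderiv_right (m := 1) (WithTop.coe_le_coe.mpr le_top)).differentiableAt one_ne_zero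
  have key : ∀ v w : ℝ × ℝ,
      fderiv ℝ (fun q => fderiv ℝ g q w) p v = fderiv ℝ (fderiv ℝ g) p v w := by
    intro v w
    have h : HasFDerivAt (fun q => fderiv ℝ g q w)
        ((ContinuousLinearMap.apply ℝ ℝ w).comp (fderiv ℝ (fderiv ℝ g) p)) p :=
      (ContinuousLinearMap.apply ℝ ℝ w).hasFDerivAt.comp p hd.hasFDerivAt
    rw [h.fderiv]
    rfl
  have hsymm := hat.isSymmSndFDerivAt (by simp [minSmoothness_of_isRCLikeNormedField]; exact WithTop.coe_le_coe.mpr le_top)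
  show fderiv ℝ (fun q => fderiv ℝ g q (1, 0)) p (0, 1)
      = fderiv ℝ (fun q => fderiv ℝ g q (0, 1)) p (1, 0)
  rw [key, key, hsymm]

/-- Green's theorem on a rectangle, in the form needed here. -/
lemma green_rectangle {Ω : Set (ℝ × ℝ)}
    (e f De Df G : ℝ × ℝ → ℝ)
    {t₁ t₂ u₁ u₂ : ℝ} (ht : t₁ ≤ t₂) (hu : u₁ ≤ u₂)
    (hrect : Set.Icc t₁ t₂ ×ˢ Set.Icc u₁ u₂ ⊆ Ω)
    (he : ∀ p ∈ Ω, HasDerivAt (fun s => e (s, p.2)) (De p) p.1)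
    (hf : ∀ p ∈ Ω, HasDerivAt (fun s => f (p.1, s)) (Df p) p.2)
    (hDe : ContinuousOn De Ω) (hDf : ContinuousOn Df Ω)
    (hecont : ContinuousOn e Ω) (hfcont : ContinuousOn f Ω)
    (hG : ∀ p ∈ Set.Icc t₁ t₂ ×ˢ Set.Icc u₁ u₂, De p + Df p = G p) :
    (∫ u in u₁..u₂, e (t₂, u)) - (∫ u in u₁..u₂, e (t₁, u))
      + (∫ t in t₁..t₂, f (t, u₂)) - ∫ t in t₁..t₂, f (t, u₁)
      = ∫ t in t₁..t₂, ∫ u in u₁..u₂, G (t, u) := by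
  have hRc : IsCompact (Set.Icc t₁ t₂ ×ˢ Set.Icc u₁ u₂) := isCompact_Icc.prod isCompact_Icc
  have hsub : Set.Ioc t₁ t₂ ×ˢ Set.Ioc u₁ u₂ ⊆ Set.Icc t₁ t₂ ×ˢ Set.Icc u₁ u₂ :=
    Set.prod_mono Set.Ioc_subset_Icc_self Set.Ioc_subset_Icc_self
  have hmeas : MeasurableSet (Set.Ioc t₁ t₂ ×ˢ Set.Ioc u₁ u₂) :=
    measurableSet_Ioc.prod measurableSet_Ioc
  have hDeI : IntegrableOn De (Set.Ioc t₁ t₂ ×ˢ Set.Ioc u₁ u₂) :=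
    (((hDe.mono hrect).integrableOn_compact hRc).mono_set hsub)
  have hDfI : IntegrableOn Df (Set.Ioc t₁ t₂ ×ˢ Set.Ioc u₁ u₂) :=
    (((hDf.mono hrect).integrableOn_compact hRc).mono_set hsub)
  have hsumI : IntegrableOn (fun p => De p + Df p) (Set.Ioc t₁ t₂ ×ˢ Set.Ioc u₁ u₂) :=
    hDeI.add hDfI
  have hGI : IntegrableOn G (Set.Ioc t₁ t₂ ×ˢ Set.Ioc u₁ u₂) :=
    hsumI.congr_fun (fun p hp => hG p (hsub hp)) hmeas
  -- representation of iterated integrals as product-set integrals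
  have rep : ∀ H : ℝ × ℝ → ℝ, IntegrableOn H (Set.Ioc t₁ t₂ ×ˢ Set.Ioc u₁ u₂) →
      (∫ t in t₁..t₂, ∫ u in u₁..u₂, H (t, u))
        = ∫ p in Set.Ioc t₁ t₂ ×ˢ Set.Ioc u₁ u₂, H p := by
    intro H hH
    rw [intervalIntegral.integral_of_le ht]
    simp_rw [intervalIntegral.integral_of_le hu]
    have hH' : Integrable H
        ((volume.restrict (Set.Ioc t₁ t₂)).prod (volume.restrict (Set.Ioc u₁ u₂))) := by
      rw [Measure.prod_restrict, ← Measure.volume_eq_prod]; exact hH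
    rw [Measure.volume_eq_prod, ← Measure.prod_restrict]
    exact (MeasureTheory.integral_prod H hH').symm
  have rep2 : ∀ H : ℝ × ℝ → ℝ, IntegrableOn H (Set.Ioc t₁ t₂ ×ˢ Set.Ioc u₁ u₂) →
      (∫ u in u₁..u₂, ∫ t in t₁..t₂, H (t, u))
        = ∫ p in Set.Ioc t₁ t₂ ×ˢ Set.Ioc u₁ u₂, H p := by
    intro H hH
    rw [intervalIntegral.integral_of_le hu]
    simp_rw [intervalIntegral.integral_of_le ht]
    have hH' : Integrable H
        ((volume.restrict (Set.Ioc t₁ t₂)).prod (volume.restrict (Set.Ioc u₁ u₂))) := by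
      rw [Measure.prod_restrict, ← Measure.volume_eq_prod]; exact hH
    rw [Measure.volume_eq_prod, ← Measure.prod_restrict]
    exact (MeasureTheory.integral_prod_symm H hH').symm
  -- FTC in the t-direction
  have hslice_e : ∀ tt ∈ Set.Icc t₁ t₂,
      IntervalIntegrable (fun u => e (tt, u)) MeasureTheory.volume u₁ u₂ := by
    intro tt htt
    apply ContinuousOn.intervalIntegrable
    exact hecont.comp ((continuous_const.prodMk continuous_id).continuousOn)
      (fun x hx => hrect ⟨htt, by rwa [Set.uIcc_of_le hu] at hx⟩)
  have hEpart : (∫ u in u₁..u₂, e (t₂, u)) - (∫ u in u₁..u₂, e (t₁, u))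
      = ∫ u in u₁..u₂, ∫ t in t₁..t₂, De (t, u) := by
    rw [← intervalIntegral.integral_sub (hslice_e t₂ (Set.right_mem_Icc.2 ht))
      (hslice_e t₁ (Set.left_mem_Icc.2 ht))]
    apply intervalIntegral.integral_congr
    intro x hx
    have hx' : x ∈ Set.Icc u₁ u₂ := by rwa [Set.uIcc_of_le hu] at hx
    have := intervalIntegral.integral_eq_sub_of_hasDerivAt
      (f := fun s => e (s, x)) (f' := fun s => De (s, x))
      (fun s hs => he (s, x) (hrect ⟨by rwa [Set.uIcc_of_le ht] at hs, hx'⟩))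
      (ContinuousOn.intervalIntegrable
        (hDe.comp ((continuous_id.prodMk continuous_const).continuousOn)
          (fun s hs => hrect ⟨by rwa [Set.uIcc_of_le ht] at hs, hx'⟩)))
    exact this.symm
  -- FTC in the u-direction
  have hslice_f : ∀ uu ∈ Set.Icc u₁ u₂,
      IntervalIntegrable (fun t => f (t, uu)) MeasureTheory.volume t₁ t₂ := by
    intro uu huu
    apply ContinuousOn.intervalIntegrable
    exact hfcont.comp ((continuous_id.prodMk continuous_const).continuousOn)
      (fun x hx => hrect ⟨by rwa [Set.uIcc_of_le ht] at hx, huu⟩)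
  have hFpart : (∫ t in t₁..t₂, f (t, u₂)) - (∫ t in t₁..t₂, f (t, u₁))
      = ∫ t in t₁..t₂, ∫ u in u₁..u₂, Df (t, u) := by
    rw [← intervalIntegral.integral_sub (hslice_f u₂ (Set.right_mem_Icc.2 hu))
      (hslice_f u₁ (Set.left_mem_Icc.2 hu))]
    apply intervalIntegral.integral_congr
    intro x hx
    have hx' : x ∈ Set.Icc t₁ t₂ := by rwa [Set.uIcc_of_le ht] at hx
    have := intervalIntegral.integral_eq_sub_of_hasDerivAt
      (f := fun s => f (x, s)) (f' := fun s => Df (x, s))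
      (fun s hs => hf (x, s) (hrect ⟨hx', by rwa [Set.uIcc_of_le hu] at hs⟩))
      (ContinuousOn.intervalIntegrable
        (hDf.comp ((continuous_const.prodMk continuous_id).continuousOn)
          (fun s hs => hrect ⟨hx', by rwa [Set.uIcc_of_le hu] at hs⟩)))
    exact this.symm
  have hsum : (∫ p in Set.Ioc t₁ t₂ ×ˢ Set.Ioc u₁ u₂, De p)
      + (∫ p in Set.Ioc t₁ t₂ ×ˢ Set.Ioc u₁ u₂, Df p)
      = ∫ p in Set.Ioc t₁ t₂ ×ˢ Set.Ioc u₁ u₂, G p := by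
    rw [← MeasureTheory.integral_add hDeI hDfI]
    exact MeasureTheory.setIntegral_congr_fun hmeas (fun p hp => hG p (hsub hp))
  have h1 := rep2 De hDeI
  have h2 := rep Df hDfI
  have h3 := rep G hGI
  linarith [hEpart, hFpart, h1, h2, h3, hsum]

set_option maxHeartbeats 2000000 in
/-- Energy–flux identity for the spherically symmetric acoustical wave
operator with multiplier `X = aL + bL̄`: for `ψ` with `□_g ψ = ρ̃`,
`E(t₂) - E(t₁) + F(u₂) - F(u₁) = ∫∫ 4πr²μQ du dt`, where
`E(t) = ∫ 4πr²·½(b|L̄ψ|² + a(κ/c)|Lψ|²) du`, `F(u) = ∫ 4πr²·a|Lψ|² dt`, and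
`Q = Q₀ + Q₁ + Q₂ + Q₃` with
`Q₀ = -ρ̃(aLψ + bL̄ψ)`, `Q₁ = (1/(2μ))Lb|L̄ψ|²`,
`Q₂ = (1/(2μ))(L̄a - aL(κ/c))|Lψ|²`, `Q₃ = -(1/(2μ))(a·trχ + b·trχ̄)Lψ·L̄ψ`. -/
theorem energy_flux_identity
    (γ : ℝ) (hγ : 1 < γ)
    (Ω : Set (ℝ × ℝ)) (hΩ : IsOpen Ω)
    (c v r ψ a b : ℝ × ℝ → ℝ)
    (hc : ContDiffOn ℝ (⊤ : ℕ∞) c Ω) (hv : ContDiffOn ℝ (⊤ : ℕ∞) v Ω) (hr : ContDiffOn ℝ (⊤ : ℕ∞) r Ω)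
    (hψ : ContDiffOn ℝ (⊤ : ℕ∞) ψ Ω) (ha : ContDiffOn ℝ (⊤ : ℕ∞) a Ω) (hb : ContDiffOn ℝ (⊤ : ℕ∞) b Ω)
    (κ μ trχ trχb Lbψ ρt Q : ℝ × ℝ → ℝ)
    (hκ : ∀ p, κ p = - Tder r p)
    (hμ : ∀ p, μ p = c p * κ p)
    (hcpos : ∀ p ∈ Ω, 0 < c p) (hrpos : ∀ p ∈ Ω, 0 < r p) (hκpos : ∀ p ∈ Ω, 0 < κ p)
    (hchar : ∀ p ∈ Ω, Lder r p = v p + c p)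
    (htrχ : ∀ p, trχ p = 2 * (v p + c p) / r p)
    (htrχb : ∀ p, trχb p = 2 * (κ p / c p) * (v p - c p) / r p)
    (hLbψ : ∀ p, Lbψ p = 2 * Tder ψ p + (κ p / c p) * Lder ψ p)
    (hρt : ∀ p, ρt p = (1 / μ p) *
      ( -(2 * κ p * v p / (c p * r p)) * Lder ψ p
        - 2 * ((v p + c p) / r p) * Tder ψ p
        - (κ p / c p) * Lder (Lder ψ) p
        - 2 * Lder (Tder ψ) p
        - Lder (fun q => κ q / c q) p * Lder ψ p))
    (hQ : ∀ p, Q p =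
      (- ρt p * (a p * Lder ψ p + b p * Lbψ p))
      + (1 / (2 * μ p)) * Lder b p * (Lbψ p) ^ 2
      + (1 / (2 * μ p)) *
          ((2 * Tder a p + (κ p / c p) * Lder a p) - a p * Lder (fun q => κ q / c q) p)
          * (Lder ψ p) ^ 2
      - (1 / (2 * μ p)) * (a p * trχ p + b p * trχb p) * Lder ψ p * Lbψ p)
    (t₁ t₂ u₁ u₂ : ℝ) (ht : t₁ ≤ t₂) (hu : u₁ ≤ u₂)
    (hrect : Set.Icc t₁ t₂ ×ˢ Set.Icc u₁ u₂ ⊆ Ω)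
    (E F : ℝ → ℝ)
    (hE : ∀ t, E t = ∫ u in u₁..u₂, 4 * π * (r (t, u)) ^ 2 *
      ((1 : ℝ) / 2) * (b (t, u) * (Lbψ (t, u)) ^ 2
        + a (t, u) * (κ (t, u) / c (t, u)) * (Lder ψ (t, u)) ^ 2))
    (hF : ∀ u, F u = ∫ t in t₁..t₂, 4 * π * (r (t, u)) ^ 2 *
      (a (t, u) * (Lder ψ (t, u)) ^ 2)) :
    E t₂ - E t₁ + F u₂ - F u₁
      = ∫ t in t₁..t₂, ∫ u in u₁..u₂,
          4 * π * (r (t, u)) ^ 2 * μ (t, u) * Q (t, u) := by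
  have hdiff : ∀ g : ℝ × ℝ → ℝ, ContDiffOn ℝ (⊤ : ℕ∞) g Ω → ∀ p ∈ Ω, DifferentiableAt ℝ g p :=
    fun g hg p hp => (hg.contDiffAt (hΩ.mem_nhds hp)).differentiableAt (by simp)
  have hκs : ContDiffOn ℝ (⊤ : ℕ∞) κ Ω := by
    have hfe : κ = fun p => -Tder r p := funext hκ
    rw [hfe]; exact (contDiffOn_Tder hΩ hr).neg
  have hws : ContDiffOn ℝ (⊤ : ℕ∞) (fun q => κ q / c q) Ω :=
    hκs.div hc fun p hp => (hcpos p hp).ne'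
  have hLψs := contDiffOn_Lder hΩ hψ
  have hTψs := contDiffOn_Tder hΩ hψ
  have hLLψs := contDiffOn_Lder hΩ hLψs
  have hLTψs := contDiffOn_Lder hΩ hTψs
  have hTLψs := contDiffOn_Tder hΩ hLψs
  have hLas := contDiffOn_Lder hΩ ha
  have hTas := contDiffOn_Tder hΩ ha
  have hLbs := contDiffOn_Lder hΩ hb
  have hLrs := contDiffOn_Lder hΩ hr
  have hTrs := contDiffOn_Tder hΩ hr
  have hLws := contDiffOn_Lder hΩ hws
  -- continuity abbreviations
  have Cr := hr.continuousOn
  have Ca := ha.continuousOn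
  have Cb := hb.continuousOn
  have Cw := hws.continuousOn
  have CLψ := hLψs.continuousOn
  have CTψ := hTψs.continuousOn
  have CLLψ := hLLψs.continuousOn
  have CLTψ := hLTψs.continuousOn
  have CTLψ := hTLψs.continuousOn
  have CLa := hLas.continuousOn
  have CTa := hTas.continuousOn
  have CLb := hLbs.continuousOn
  have CLr := hLrs.continuousOn
  have CTr := hTrs.continuousOn
  have CLw := hLws.continuousOn
  have CΛ : ContinuousOn (fun p : ℝ × ℝ => 2 * Tder ψ p + κ p / c p * Lder ψ p) Ω :=
    (continuousOn_const.mul CTψ).add (Cw.mul CLψ)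
  have CΛL : ContinuousOn (fun p : ℝ × ℝ =>
      2 * Lder (Tder ψ) p + Lder (fun q => κ q / c q) p * Lder ψ p
        + κ p / c p * Lder (Lder ψ) p) Ω :=
    ((continuousOn_const.mul CLTψ).add (CLw.mul CLψ)).add (Cw.mul CLLψ)
  -- the derivative of the t-slice of the energy density
  have heA : ∀ p ∈ Ω, HasDerivAt
      (fun s => 4 * π * (r (s, p.2)) ^ 2 * ((1 : ℝ) / 2) * (b (s, p.2) * (Lbψ (s, p.2)) ^ 2
        + a (s, p.2) * (κ (s, p.2) / c (s, p.2)) * (Lder ψ (s, p.2)) ^ 2))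
      (4 * π * (2 * r p * Lder r p) * ((1 : ℝ) / 2)
          * (b p * (2 * Tder ψ p + κ p / c p * Lder ψ p) ^ 2
            + a p * (κ p / c p) * (Lder ψ p) ^ 2)
        + 4 * π * (r p) ^ 2 * ((1 : ℝ) / 2)
          * (Lder b p * (2 * Tder ψ p + κ p / c p * Lder ψ p) ^ 2
            + b p * (2 * (2 * Tder ψ p + κ p / c p * Lder ψ p)
              * (2 * Lder (Tder ψ) p + Lder (fun q => κ q / c q) p * Lder ψ p
                + κ p / c p * Lder (Lder ψ) p))
            + Lder a p * (κ p / c p) * (Lder ψ p) ^ 2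
            + a p * Lder (fun q => κ q / c q) p * (Lder ψ p) ^ 2
            + a p * (κ p / c p) * (2 * Lder ψ p * Lder (Lder ψ) p))) p.1 := by
    intro p hp
    have Hr := hasDerivAt_fst_slice (hdiff r hr p hp)
    have Ha := hasDerivAt_fst_slice (hdiff a ha p hp)
    have Hb := hasDerivAt_fst_slice (hdiff b hb p hp)
    have HLψ := hasDerivAt_fst_slice (hdiff _ hLψs p hp)
    have HTψ := hasDerivAt_fst_slice (hdiff _ hTψs p hp)
    have Hw := hasDerivAt_fst_slice (hdiff _ hws p hp)
    simp only [hLbψ]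
    have H := ((((hasDerivAt_const p.1 (4 * π)).mul (Hr.pow 2)).mul_const ((1 : ℝ) / 2)).mul
      ((Hb.mul (((HTψ.const_mul 2).add (Hw.mul HLψ)).pow 2)).add
        ((Ha.mul Hw).mul (HLψ.pow 2))))
    convert H using 1
    · rfl
    · rfl
    · rfl
    · simp only [Pi.mul_apply, Pi.pow_apply, Pi.add_apply, Prod.mk.eta]
      push_cast
      ring
  -- the derivative of the u-slice of the flux density
  have hfA : ∀ p ∈ Ω, HasDerivAt
      (fun s => 4 * π * (r (p.1, s)) ^ 2 * (a (p.1, s) * (Lder ψ (p.1, s)) ^ 2))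
      (4 * π * (2 * r p * Tder r p) * (a p * (Lder ψ p) ^ 2)
        + 4 * π * (r p) ^ 2 * (Tder a p * (Lder ψ p) ^ 2
          + a p * (2 * Lder ψ p * Tder (Lder ψ) p))) p.2 := by
    intro p hp
    have Hr := hasDerivAt_snd_slice (hdiff r hr p hp)
    have Ha := hasDerivAt_snd_slice (hdiff a ha p hp)
    have HLψ := hasDerivAt_snd_slice (hdiff _ hLψs p hp)
    have H := (((hasDerivAt_const p.2 (4 * π)).mul (Hr.pow 2)).mul (Ha.mul (HLψ.pow 2)))
    convert H using 1
    · rfl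
    · rfl
    · rfl
    · simp only [Pi.mul_apply, Pi.pow_apply, Pi.add_apply, Prod.mk.eta]
      push_cast
      ring
  -- continuity of the densities and their derivatives
  have heC : ContinuousOn (fun p : ℝ × ℝ => 4 * π * (r p) ^ 2 * ((1 : ℝ) / 2)
      * (b p * (Lbψ p) ^ 2 + a p * (κ p / c p) * (Lder ψ p) ^ 2)) Ω := by
    simp only [hLbψ]
    exact ((continuousOn_const.mul (Cr.pow 2)).mul continuousOn_const).mul
      ((Cb.mul (CΛ.pow 2)).add ((Ca.mul Cw).mul (CLψ.pow 2)))
  have hfC : ContinuousOn (fun p : ℝ × ℝ =>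
      4 * π * (r p) ^ 2 * (a p * (Lder ψ p) ^ 2)) Ω :=
    (continuousOn_const.mul (Cr.pow 2)).mul (Ca.mul (CLψ.pow 2))
  have hDeC : ContinuousOn (fun p : ℝ × ℝ =>
      4 * π * (2 * r p * Lder r p) * ((1 : ℝ) / 2)
          * (b p * (2 * Tder ψ p + κ p / c p * Lder ψ p) ^ 2
            + a p * (κ p / c p) * (Lder ψ p) ^ 2)
        + 4 * π * (r p) ^ 2 * ((1 : ℝ) / 2)
          * (Lder b p * (2 * Tder ψ p + κ p / c p * Lder ψ p) ^ 2
            + b p * (2 * (2 * Tder ψ p + κ p / c p * Lder ψ p)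
              * (2 * Lder (Tder ψ) p + Lder (fun q => κ q / c q) p * Lder ψ p
                + κ p / c p * Lder (Lder ψ) p))
            + Lder a p * (κ p / c p) * (Lder ψ p) ^ 2
            + a p * Lder (fun q => κ q / c q) p * (Lder ψ p) ^ 2
            + a p * (κ p / c p) * (2 * Lder ψ p * Lder (Lder ψ) p))) Ω := by
    exact (((continuousOn_const.mul ((continuousOn_const.mul Cr).mul CLr)).mul
        continuousOn_const).mul
        ((Cb.mul (CΛ.pow 2)).add ((Ca.mul Cw).mul (CLψ.pow 2)))).add
      (((continuousOn_const.mul (Cr.pow 2)).mul continuousOn_const).mul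
        (((((CLb.mul (CΛ.pow 2)).add
          (Cb.mul ((continuousOn_const.mul CΛ).mul CΛL))).add
          ((CLa.mul Cw).mul (CLψ.pow 2))).add
          ((Ca.mul CLw).mul (CLψ.pow 2))).add
          ((Ca.mul Cw).mul ((continuousOn_const.mul CLψ).mul CLLψ))))
  have hDfC : ContinuousOn (fun p : ℝ × ℝ =>
      4 * π * (2 * r p * Tder r p) * (a p * (Lder ψ p) ^ 2)
        + 4 * π * (r p) ^ 2 * (Tder a p * (Lder ψ p) ^ 2
          + a p * (2 * Lder ψ p * Tder (Lder ψ) p))) Ω := by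
    exact ((continuousOn_const.mul ((continuousOn_const.mul Cr).mul CTr)).mul
        (Ca.mul (CLψ.pow 2))).add
      ((continuousOn_const.mul (Cr.pow 2)).mul
        ((CTa.mul (CLψ.pow 2)).add
          (Ca.mul ((continuousOn_const.mul CLψ).mul CTLψ))))
  -- pointwise divergence identity
  have hGpt : ∀ p ∈ Set.Icc t₁ t₂ ×ˢ Set.Icc u₁ u₂,
      (4 * π * (2 * r p * Lder r p) * ((1 : ℝ) / 2)
          * (b p * (2 * Tder ψ p + κ p / c p * Lder ψ p) ^ 2
            + a p * (κ p / c p) * (Lder ψ p) ^ 2)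
        + 4 * π * (r p) ^ 2 * ((1 : ℝ) / 2)
          * (Lder b p * (2 * Tder ψ p + κ p / c p * Lder ψ p) ^ 2
            + b p * (2 * (2 * Tder ψ p + κ p / c p * Lder ψ p)
              * (2 * Lder (Tder ψ) p + Lder (fun q => κ q / c q) p * Lder ψ p
                + κ p / c p * Lder (Lder ψ) p))
            + Lder a p * (κ p / c p) * (Lder ψ p) ^ 2
            + a p * Lder (fun q => κ q / c q) p * (Lder ψ p) ^ 2
            + a p * (κ p / c p) * (2 * Lder ψ p * Lder (Lder ψ) p)))
      + (4 * π * (2 * r p * Tder r p) * (a p * (Lder ψ p) ^ 2)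
        + 4 * π * (r p) ^ 2 * (Tder a p * (Lder ψ p) ^ 2
          + a p * (2 * Lder ψ p * Tder (Lder ψ) p)))
      = 4 * π * (r p) ^ 2 * μ p * Q p := by
    intro p hp'
    have hpΩ := hrect hp'
    have hc0 : c p ≠ 0 := (hcpos p hpΩ).ne'
    have hr0 : r p ≠ 0 := (hrpos p hpΩ).ne'
    have hκ0 : κ p ≠ 0 := (hκpos p hpΩ).ne'
    have hsym : Tder (Lder ψ) p = Lder (Tder ψ) p := Tder_Lder_comm hΩ hψ hpΩ
    have hTr : Tder r p = -κ p := by have := hκ p; linarith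
    rw [hQ p, hρt p, hLbψ p, htrχ p, htrχb p, hμ p, hchar p hpΩ, hsym, hTr]
    field_simp
    ring
  have key := green_rectangle
      (fun p : ℝ × ℝ => 4 * π * (r p) ^ 2 * ((1 : ℝ) / 2)
        * (b p * (Lbψ p) ^ 2 + a p * (κ p / c p) * (Lder ψ p) ^ 2))
      (fun p : ℝ × ℝ => 4 * π * (r p) ^ 2 * (a p * (Lder ψ p) ^ 2))
      (fun p : ℝ × ℝ =>
        4 * π * (2 * r p * Lder r p) * ((1 : ℝ) / 2)
            * (b p * (2 * Tder ψ p + κ p / c p * Lder ψ p) ^ 2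
              + a p * (κ p / c p) * (Lder ψ p) ^ 2)
          + 4 * π * (r p) ^ 2 * ((1 : ℝ) / 2)
            * (Lder b p * (2 * Tder ψ p + κ p / c p * Lder ψ p) ^ 2
              + b p * (2 * (2 * Tder ψ p + κ p / c p * Lder ψ p)
                * (2 * Lder (Tder ψ) p + Lder (fun q => κ q / c q) p * Lder ψ p
                  + κ p / c p * Lder (Lder ψ) p))
              + Lder a p * (κ p / c p) * (Lder ψ p) ^ 2
              + a p * Lder (fun q => κ q / c q) p * (Lder ψ p) ^ 2
              + a p * (κ p / c p) * (2 * Lder ψ p * Lder (Lder ψ) p)))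
      (fun p : ℝ × ℝ =>
        4 * π * (2 * r p * Tder r p) * (a p * (Lder ψ p) ^ 2)
          + 4 * π * (r p) ^ 2 * (Tder a p * (Lder ψ p) ^ 2
            + a p * (2 * Lder ψ p * Tder (Lder ψ) p)))
      (fun p : ℝ × ℝ => 4 * π * (r p) ^ 2 * μ p * Q p)
      ht hu hrect heA hfA hDeC hDfC heC hfC hGpt
  rw [hE t₂, hE t₁, hF u₂, hF u₁]
  exact key
end
end

section
/- Let γ > 1, r₀ > 0, c₀ > 0 and define r(t) := r₀ + c₀ t, y(t) := −(2/(γ+1)) · r₀/r(t), k(t) := (r₀/c₀) · ln(r(t)/r₀). Define A(t) := 1/((γ+1)c₀) · (r₀/r(t))² · ln(r(t)/r₀), B(t) := (1/c₀) · [ (γ+9)/(γ+1)² · r₀/r(t) − (γ+9)/(γ+1)² · (r₀/r(t))² − 5/(γ+1) · (r₀/r(t))² · ln(r(t)/r₀) ], and C(t) := (r₀/c₀²) · [ −(γ+9)/(2(γ+1)) · ln(r(t)/r₀) + (5γ+17)/(2(γ+1)) · (1 − r₀/r(t)) − (2γ+4)/(γ+1) · (r₀/r(t)) · ln(r(t)/r₀)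 ]. Then for all t ≥ 0: (i) A(t) = −k(t)·y(t)/(2r(t)); (ii) B'(t) = −(c₀/r(t))·B(t) + 5/(γ+1) · (1/r₀) · (r₀/r(t))³ · ln(r(t)/r₀) − 4(γ−1)/(γ+1)² · (1/r₀) · (r₀/r(t))³, with B(0) = 0; (iii) C'(t) = −((γ+1)/2)·B(t) + ((3−γ)/2)·A(t), with C(0) = 0. -/
/-!
In the variables `ρ = r₀ / r` and `ℓ = log (r / r₀)` along `r' = c` one has `ρ' = -(c / r₀) ρ²` and
`ℓ' = (c / r₀) ρ`, so `A`, `B`, `C` are polynomials in `ρ` and `ℓ` whose derivatives are again such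
polynomials. Differentiating the general ansätze `B = (aρ - aρ² - bρ²ℓ) / c` and
`C = r₀ (pℓ + q(1 - ρ) - mρℓ) / c²` reduces (ii) and (iii) to identities between the coefficients,
which the explicit rational functions of `γ` satisfy.
-/

open Real

section RatioVariables

variable {r : ℝ → ℝ} {r₀ c t : ℝ}

theorem hasDerivAt_ratio (hr : HasDerivAt r c t) (hrt : r t ≠ 0) :
    HasDerivAt (fun s => r₀ / r s) (-(c / r₀) * (r₀ / r t) ^ 2) t :=
  ((hasDerivAt_const t r₀).div hr hrt).congr_deriv (by field_simp; ring)

theorem hasDerivAt_log_ratio (hr : HasDerivAt r c t) (hr₀ : r₀ ≠ 0) (hrt : r t ≠ 0) :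
    HasDerivAt (fun s => log (r s / r₀)) (c / r₀ * (r₀ / r t)) t :=
  ((hr.div_const r₀).log (div_ne_zero hrt hr₀)).congr_deriv (by field_simp)

theorem hasDerivAt_T2wBar_ansatz (hr : HasDerivAt r c t) (hr₀ : r₀ ≠ 0) (hrt : r t ≠ 0)
    (hc : c ≠ 0) (a b : ℝ) :
    HasDerivAt
      (fun s => 1 / c * (a * (r₀ / r s) - a * (r₀ / r s) ^ 2
        - b * (r₀ / r s) ^ 2 * log (r s / r₀)))
      (-(c / r t) * (1 / c * (a * (r₀ / r t) - a * (r₀ / r t) ^ 2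
        - b * (r₀ / r t) ^ 2 * log (r t / r₀)))
        + 1 / r₀ * (r₀ / r t) ^ 3 * (b * log (r t / r₀) + (a - b))) t := by
  have hρ := hasDerivAt_ratio (r₀ := r₀) hr hrt
  have hℓ := hasDerivAt_log_ratio hr hr₀ hrt
  refine ((((hρ.const_mul a).sub ((hρ.pow 2).const_mul a)).sub
    (((hρ.pow 2).const_mul b).mul hℓ)).const_mul (1 / c)).congr_deriv ?_
  simp only [Pi.pow_apply, Nat.reduceSub, pow_one]
  field_simp
  ring

theorem hasDerivAt_Tkappa_ansatz (hr : HasDerivAt r c t) (hr₀ : r₀ ≠ 0) (hrt : r t ≠ 0)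
    (hc : c ≠ 0) (p q m : ℝ) :
    HasDerivAt
      (fun s => r₀ / c ^ 2 * (p * log (r s / r₀) + q * (1 - r₀ / r s)
        - m * (r₀ / r s) * log (r s / r₀)))
      (1 / c * (p * (r₀ / r t) + (q - m) * (r₀ / r t) ^ 2
        + m * (r₀ / r t) ^ 2 * log (r t / r₀))) t := by
  have hρ := hasDerivAt_ratio (r₀ := r₀) hr hrt
  have hℓ := hasDerivAt_log_ratio hr hr₀ hrt
  refine ((((hℓ.const_mul p).add (((hasDerivAt_const t 1).sub hρ).const_mul q)).sub
    ((hρ.const_mul m).mul hℓ)).const_mul (r₀ / c ^ 2)).congr_deriv ?_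
  field_simp
  ring

end RatioVariables

/-- For the constant background state, the explicit second-order data
`A = T²w`, `B = T²w̄`, `C = Tκ` on `C₀` satisfy:
(i) `A = -k·y/(2r)`;
(ii) `B' = -(c₀/r)B + (5/(γ+1))(1/r₀)(r₀/r)³ln(r/r₀) - (4(γ-1)/(γ+1)²)(1/r₀)(r₀/r)³`,
`B(0) = 0`;
(iii) `C' = -((γ+1)/2)B + ((3-γ)/2)A`, `C(0) = 0`. -/
theorem constant_state_second_order_data
    (γ r₀ c₀ : ℝ) (hγ : 1 < γ) (hr₀ : 0 < r₀) (hc₀ : 0 < c₀)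
    (r y k A B C : ℝ → ℝ)
    (hr : ∀ t, r t = r₀ + c₀ * t)
    (hy : ∀ t, y t = -(2 / (γ + 1)) * (r₀ / r t))
    (hk : ∀ t, k t = (r₀ / c₀) * Real.log (r t / r₀))
    (hA : ∀ t, A t = 1 / ((γ + 1) * c₀) * (r₀ / r t) ^ 2 * Real.log (r t / r₀))
    (hB : ∀ t, B t = (1 / c₀) *
      ((γ + 9) / (γ + 1) ^ 2 * (r₀ / r t)
        - (γ + 9) / (γ + 1) ^ 2 * (r₀ / r t) ^ 2
        - 5 / (γ + 1) * (r₀ / r t) ^ 2 * Real.log (r t / r₀)))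
    (hC : ∀ t, C t = (r₀ / c₀ ^ 2) *
      (-(γ + 9) / (2 * (γ + 1)) * Real.log (r t / r₀)
        + (5 * γ + 17) / (2 * (γ + 1)) * (1 - r₀ / r t)
        - (2 * γ + 4) / (γ + 1) * (r₀ / r t) * Real.log (r t / r₀))) :
    (∀ t : ℝ, 0 ≤ t → A t = -(k t * y t) / (2 * r t)) ∧
    (∀ t : ℝ, 0 ≤ t → HasDerivAt B
      (-(c₀ / r t) * B t + 5 / (γ + 1) * (1 / r₀) * (r₀ / r t) ^ 3 * Real.log (r t / r₀)
        - 4 * (γ - 1) / (γ + 1) ^ 2 * (1 / r₀) * (r₀ / r t) ^ 3) t) ∧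
    B 0 = 0 ∧
    (∀ t : ℝ, 0 ≤ t → HasDerivAt C (-((γ + 1) / 2) * B t + ((3 - γ) / 2) * A t) t) ∧
    C 0 = 0 := by
  have hγ₁ : γ + 1 ≠ 0 := by linarith
  have hrt : ∀ t, 0 ≤ t → r t ≠ 0 := fun t ht => by rw [hr]; positivity
  have hr' : ∀ t, HasDerivAt r c₀ t := fun t => by
    rw [show r = fun s => r₀ + c₀ * s from funext hr]
    simpa using ((hasDerivAt_id t).const_mul c₀).const_add r₀
  refine ⟨fun t ht => ?_, fun t ht => ?_, by simp [hB, hr, hr₀.ne'], fun t ht => ?_,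
    by simp [hC, hr, hr₀.ne']⟩
  · rw [hA, hk, hy]
    field_simp [hrt t ht]
  · rw [funext hB]
    refine (hasDerivAt_T2wBar_ansatz (hr' t) hr₀.ne' (hrt t ht) hc₀.ne' _ _).congr_deriv ?_
    field_simp
    ring
  · rw [funext hC, hB, hA]
    refine (hasDerivAt_Tkappa_ansatz (hr' t) hr₀.ne' (hrt t ht) hc₀.ne' _ _ _).congr_deriv ?_
    field_simp
    ring
end

section
/- Let K > 0 and let a : ℕ → ℝ be a sequence with a(n) ≥ 0 for all n, satisfying a(n) ≤ (K/(2n)) · Σ_{i=0}^{n−1} [ i!·(n−1−i)!/(n−1)! ] · a(n−1−i) for all n ≥ 1. Then the sequence (a(n)) is bounded: there exists C > 0 with a(n) ≤ C for all n. -/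
/-!
Every coefficient `i!(m-i)!/m!` is `1 / m.choose i`, and `m ≤ m.choose i` away from the two
endpoints, so the coefficients in the recursion sum to at most `3`. Hence once `n ≥ 3K/2` the
recursion bounds `a n` by the largest earlier value, and strong induction propagates a bound on
the finitely many initial terms to the whole sequence.
-/

open Finset
open scoped Nat

theorem Nat.le_choose_of_pos_of_lt {n k : ℕ} (hk : 0 < k) (hkn : k < n) : n ≤ n.choose k := by
  induction n generalizing k with
  | zero => omega
  | succ m ih =>
    obtain ⟨j, rfl⟩ : ∃ j, k = j + 1 := ⟨k - 1, by omega⟩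
    rw [Nat.choose_succ_succ']
    rcases j.eq_zero_or_pos with rfl | hj
    · simp [add_comm]
    · have := ih hj (by omega)
      have := Nat.choose_pos (show j + 1 ≤ m by omega)
      omega

theorem Nat.factorial_mul_factorial_div_factorial_eq_inv_choose {𝕜 : Type*} [DivisionRing 𝕜]
    [CharZero 𝕜] {m i : ℕ} (h : i ≤ m) :
    ((i ! : 𝕜) * (m - i)!) / m ! = ((m.choose i : 𝕜))⁻¹ := by
  rw [Nat.cast_choose 𝕜 h, inv_div]

theorem sum_inv_choose_le_three (m : ℕ) : ∑ i ∈ range (m + 1), ((m.choose i : ℝ))⁻¹ ≤ 3 := by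
  rcases m with _ | p
  · norm_num
  have hmiddle : ∑ i ∈ range p, (((p + 1).choose (i + 1) : ℝ))⁻¹ ≤ 1 := by
    calc ∑ i ∈ range p, (((p + 1).choose (i + 1) : ℝ))⁻¹
        ≤ ∑ _i ∈ range p, ((p + 1 : ℕ) : ℝ)⁻¹ := by
          refine sum_le_sum fun i hi => ?_
          have := Nat.le_choose_of_pos_of_lt (Nat.succ_pos i)
            (show i + 1 < p + 1 by simpa using hi)
          gcongr
      _ = p / (p + 1) := by simp [div_eq_mul_inv]
      _ ≤ 1 := by rw [div_le_one (by positivity)]; linarith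
  rw [sum_range_succ, sum_range_succ']
  simp only [Nat.choose_self, Nat.choose_zero_right, Nat.cast_one, inv_one]
  linarith

theorem exists_pos_forall_le_of_forall_lt_imp_le (a : ℕ → ℝ) (N : ℕ)
    (hstep : ∀ n, N < n → ∀ C, 0 < C → (∀ m < n, a m ≤ C) → a n ≤ C) :
    ∃ C, 0 < C ∧ ∀ n, a n ≤ C := by
  obtain ⟨C₀, hC₀⟩ := ((range (N + 1)).image a).bddAbove
  refine ⟨max C₀ 1, by positivity, fun n => ?_⟩
  induction n using Nat.strong_induction_on with
  | _ n ih =>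
    by_cases hn : n ≤ N
    · exact le_max_of_le_left (hC₀ (mem_image_of_mem a (mem_range.2 (by omega))))
    · exact hstep n (by omega) _ (by positivity) ih

theorem recursive_inequality_bounded_general
    (K : ℝ) (hK : 0 < K)
    (a : ℕ → ℝ)
    (hrec : ∀ n : ℕ, 1 ≤ n →
      a n ≤ K / (2 * (n : ℝ)) * ∑ i ∈ Finset.range n,
        ((i.factorial : ℝ) * ((n - 1 - i).factorial : ℝ)) / ((n - 1).factorial : ℝ)
          * a (n - 1 - i)) :
    ∃ C : ℝ, 0 < C ∧ ∀ n, a n ≤ C := by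
  refine exists_pos_forall_le_of_forall_lt_imp_le a ⌈3 * K / 2⌉₊ fun n hn C hC hlt => ?_
  obtain ⟨m, rfl⟩ : ∃ m, n = m + 1 := ⟨n - 1, by omega⟩
  have hlarge : 3 * K ≤ 2 * ((m + 1 : ℕ) : ℝ) := by
    have := (Nat.le_ceil (3 * K / 2)).trans (Nat.cast_le.2 hn.le)
    push_cast at this ⊢
    linarith
  calc a (m + 1)
      ≤ K / (2 * ((m + 1 : ℕ) : ℝ)) * ∑ i ∈ range (m + 1), ((m.choose i : ℝ))⁻¹ * C := by
        refine (hrec _ (by omega)).trans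
          (mul_le_mul_of_nonneg_left (sum_le_sum fun i hi => ?_) (by positivity))
        have hi : i ≤ m := Nat.lt_succ_iff.1 (mem_range.1 hi)
        rw [Nat.add_sub_cancel, Nat.factorial_mul_factorial_div_factorial_eq_inv_choose hi]
        exact mul_le_mul_of_nonneg_left (hlt _ (by omega)) (by positivity)
    _ ≤ K / (2 * ((m + 1 : ℕ) : ℝ)) * (3 * C) := by
        rw [← sum_mul]
        gcongr
        exact sum_inv_choose_le_three m
    _ ≤ C := by
        rw [div_mul_eq_mul_div, div_le_iff₀ (by positivity)]
        nlinarith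

/-- If `a : ℕ → ℝ` is nonnegative and satisfies
`a(n) ≤ (K/(2n))·Σ_{i=0}^{n-1} [i!(n-1-i)!/(n-1)!]·a(n-1-i)` for all `n ≥ 1`,
then `(a(n))` is bounded. -/
theorem recursive_inequality_bounded
    (K : ℝ) (hK : 0 < K)
    (a : ℕ → ℝ) (ha : ∀ n, 0 ≤ a n)
    (hrec : ∀ n : ℕ, 1 ≤ n →
      a n ≤ K / (2 * (n : ℝ)) * ∑ i ∈ Finset.range n,
        ((i.factorial : ℝ) * ((n - 1 - i).factorial : ℝ)) / ((n - 1).factorial : ℝ)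
          * a (n - 1 - i)) :
    ∃ C : ℝ, 0 < C ∧ ∀ n, a n ≤ C :=
  recursive_inequality_bounded_general K hK a hrec
end

section
/- Let γ > 1, c₀ > 0, and set λ := (γ−1)/(γ+1) ∈ (0,1). Let b : ℕ → ℝ be any sequence satisfying the recursion b(n) = −(1/2) · Σ_{i=0}^{n−1} i! · λ^i / c₀^{i+1} · b(n−1−i) for all n ≥ 1. Then there exists a constant C > 0 such that |b(n)| ≤ C · (λ/c₀)ⁿ · n! for all n ∈ ℕ. -/
/-!
Measured against `(λ/c₀)ⁿ n!`, the recursion expresses `b (m+1)` through the convolution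
`∑ i! (m-i)! ≤ 3 m!`, so `|b (m+1)|` is at most `3 / (2λ(m+1))` times the best constant valid for
`b 0, …, b m`. Once `2λ(m+1) ≥ 3` that factor is at most one, and the bound propagates by strong
induction from a constant chosen to cover the finitely many earlier terms.
-/

open Finset Nat

theorem Nat.factorial_succ_mul_factorial_succ_le (i j : ℕ) :
    (i + 1)! * (j + 1)! ≤ (i + j + 1)! := by
  induction j with
  | zero => simp
  | succ j ih =>
    calc (i + 1)! * (j + 1 + 1)! = (j + 2) * ((i + 1)! * (j + 1)!) := by
          rw [factorial_succ (j + 1)]; ring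
      _ ≤ (i + j + 2) * (i + j + 1)! := by gcongr; omega
      _ = (i + (j + 1) + 1)! := (factorial_succ _).symm

theorem Nat.sum_range_factorial_mul_factorial_sub_le (m : ℕ) :
    ∑ i ∈ range (m + 1), i ! * (m - i)! ≤ 3 * m ! := by
  rcases m with _ | k
  · simp
  rw [sum_range_succ, sum_range_succ']
  have hmiddle : ∑ i ∈ range k, (i + 1)! * (k + 1 - (i + 1))! ≤ k * k ! := by
    calc ∑ i ∈ range k, (i + 1)! * (k + 1 - (i + 1))!
        ≤ ∑ _i ∈ range k, k ! := by
          refine sum_le_sum fun i hi => ?_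
          obtain ⟨j, rfl⟩ : ∃ j, k = i + j + 1 := ⟨k - i - 1, by grind⟩
          simpa [show i + j + 1 + 1 - (i + 1) = j + 1 by omega] using
            factorial_succ_mul_factorial_succ_le i j
      _ = k * k ! := by simp
  have hk : k * k ! ≤ (k + 1)! := by rw [factorial_succ]; gcongr; omega
  simp only [Nat.sub_self, factorial_zero, mul_one, Nat.sub_zero, one_mul]
  omega

theorem exists_pos_forall_le_mul_of_step {f w : ℕ → ℝ} (hw : ∀ n, 0 < w n) (N : ℕ)
    (hstep : ∀ n, N ≤ n → ∀ C, 0 ≤ C → (∀ k < n, f k ≤ C * w k) → f n ≤ C * w n) :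
    ∃ C, 0 < C ∧ ∀ n, f n ≤ C * w n := by
  set C := 1 + ∑ k ∈ range N, |f k| / w k
  have hterm : ∀ k, 0 ≤ |f k| / w k := fun k => div_nonneg (abs_nonneg _) (hw k).le
  have hC : 0 < C := by linarith [sum_nonneg fun k (_ : k ∈ range N) => hterm k]
  refine ⟨C, hC, fun n => ?_⟩
  induction n using Nat.strong_induction_on with
  | _ n ih =>
  rcases lt_or_ge n N with hn | hn
  · calc f n ≤ |f n| / w n * w n := by rw [div_mul_cancel₀ _ (hw n).ne']; exact le_abs_self _
      _ ≤ C * w n := by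
          gcongr
          · exact (hw n).le
          · linarith [single_le_sum (fun k _ => hterm k) (mem_range.mpr hn)]
  · exact hstep n hn C hC.le ih

section Recursion

variable {c₀ lam : ℝ} {b : ℕ → ℝ} {m : ℕ} {C : ℝ}

theorem abs_recursion_term_le (hc₀ : 0 < c₀) (hlam0 : 0 < lam) {i : ℕ} (hi : i ≤ m)
    (hb : |b (m - i)| ≤ C * ((lam / c₀) ^ (m - i) * (m - i)!)) :
    |(i ! : ℝ) * lam ^ i / c₀ ^ (i + 1) * b (m - i)|
      ≤ C * lam ^ m / c₀ ^ (m + 1) * (i ! * (m - i)! : ℕ) := by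
  have hcoeff : 0 ≤ (i ! : ℝ) * lam ^ i / c₀ ^ (i + 1) := by positivity
  rw [abs_mul, abs_of_nonneg hcoeff]
  calc (i ! : ℝ) * lam ^ i / c₀ ^ (i + 1) * |b (m - i)|
      ≤ (i ! : ℝ) * lam ^ i / c₀ ^ (i + 1) * (C * ((lam / c₀) ^ (m - i) * (m - i)!)) := by
        gcongr
    _ = C * lam ^ m / c₀ ^ (m + 1) * (i ! * (m - i)! : ℕ) := by
        obtain ⟨j, rfl⟩ := Nat.exists_eq_add_of_le hi
        rw [Nat.add_sub_cancel_left, div_pow]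
        push_cast
        field_simp
        ring

theorem abs_le_of_recursion (hc₀ : 0 < c₀) (hlam0 : 0 < lam)
    (hrec : b (m + 1) = -(1 / 2) * ∑ i ∈ range (m + 1),
      (i ! : ℝ) * lam ^ i / c₀ ^ (i + 1) * b (m - i))
    (hC : 0 ≤ C) (hm : 3 ≤ 2 * lam * (m + 1))
    (ih : ∀ k ≤ m, |b k| ≤ C * ((lam / c₀) ^ k * k !)) :
    |b (m + 1)| ≤ C * ((lam / c₀) ^ (m + 1) * (m + 1)!) := by
  set A := C * lam ^ m / c₀ ^ (m + 1)
  have hA : 0 ≤ A := by positivity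
  calc |b (m + 1)| = 1 / 2 * |∑ i ∈ range (m + 1),
        (i ! : ℝ) * lam ^ i / c₀ ^ (i + 1) * b (m - i)| := by
        rw [hrec, abs_mul]; norm_num
    _ ≤ 1 / 2 * ∑ i ∈ range (m + 1), |(i ! : ℝ) * lam ^ i / c₀ ^ (i + 1) * b (m - i)| := by
        gcongr; exact abs_sum_le_sum_abs _ _
    _ ≤ 1 / 2 * ∑ i ∈ range (m + 1), A * (i ! * (m - i)! : ℕ) := by
        gcongr with i hi
        have hi : i ≤ m := Nat.lt_succ_iff.mp (mem_range.mp hi)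
        exact abs_recursion_term_le hc₀ hlam0 hi (ih _ (Nat.sub_le m i))
    _ ≤ 1 / 2 * (A * (3 * m ! : ℕ)) := by
        rw [← mul_sum]
        gcongr
        exact_mod_cast sum_range_factorial_mul_factorial_sub_le m
    _ ≤ A * m ! * (lam * (m + 1)) := by
        push_cast
        have : 0 ≤ A * m ! := by positivity
        nlinarith
    _ = C * ((lam / c₀) ^ (m + 1) * (m + 1)!) := by
        rw [factorial_succ, div_pow, pow_succ lam]
        push_cast
        ring

end Recursion

theorem recursion_factorial_growth_general
    (c₀ : ℝ) (hc₀ : 0 < c₀)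
    (lam : ℝ)
    (hlam0 : 0 < lam)
    (b : ℕ → ℝ)
    (hrec : ∀ n : ℕ, 1 ≤ n →
      b n = -(1 / 2) * ∑ i ∈ Finset.range n,
        (i.factorial : ℝ) * lam ^ i / c₀ ^ (i + 1) * b (n - 1 - i)) :
    ∃ C : ℝ, 0 < C ∧ ∀ n : ℕ, |b n| ≤ C * (lam / c₀) ^ n * (n.factorial : ℝ) := by
  obtain ⟨N, hN⟩ := exists_nat_ge (3 / (2 * lam))
  obtain ⟨C, hC, hbound⟩ := exists_pos_forall_le_mul_of_step (f := fun n => |b n|)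
    (w := fun n => (lam / c₀) ^ n * n !) (fun n => by positivity) (N + 1) <| by
    rintro n hn C hC ih
    obtain ⟨m, rfl⟩ : ∃ m, n = m + 1 := ⟨n - 1, by omega⟩
    have hm : 3 ≤ 2 * lam * (m + 1) := by
      have hNm : (N : ℝ) ≤ m := by exact_mod_cast Nat.le_of_succ_le_succ hn
      rw [div_le_iff₀ (by positivity)] at hN
      nlinarith
    exact abs_le_of_recursion hc₀ hlam0 (by simpa using hrec (m + 1) (by omega)) hC hm
      fun k hk => ih k (Nat.lt_succ_of_le hk)
  exact ⟨C, hC, fun n => (hbound n).trans_eq (mul_assoc _ _ _).symm⟩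

/-- Let `γ > 1`, `c₀ > 0`, `λ = (γ-1)/(γ+1) ∈ (0,1)`. Any sequence
`b : ℕ → ℝ` satisfying `b(n) = -(1/2)·Σ_{i=0}^{n-1} i!·λ^i/c₀^{i+1}·b(n-1-i)` for all
`n ≥ 1` obeys the factorial growth bound `|b(n)| ≤ C·(λ/c₀)ⁿ·n!` for some `C > 0`. -/
theorem recursion_factorial_growth
    (γ c₀ : ℝ) (hγ : 1 < γ) (hc₀ : 0 < c₀)
    (lam : ℝ) (hlam : lam = (γ - 1) / (γ + 1))
    (hlam0 : 0 < lam) (hlam1 : lam < 1)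
    (b : ℕ → ℝ)
    (hrec : ∀ n : ℕ, 1 ≤ n →
      b n = -(1 / 2) * ∑ i ∈ Finset.range n,
        (i.factorial : ℝ) * lam ^ i / c₀ ^ (i + 1) * b (n - 1 - i)) :
    ∃ C : ℝ, 0 < C ∧ ∀ n : ℕ, |b n| ≤ C * (lam / c₀) ^ n * (n.factorial : ℝ) :=
  recursion_factorial_growth_general c₀ hc₀ lam hlam0 b hrec
end

section
/- Let 0 < δ ≤ t* and let E : [δ, t*] → ℝ be continuous and nonnegative. Suppose there is a constant C_α ≥ 0 such that E(t) ≤ C_α t² + ∫_δ^t (0.6/s) · E(s) ds for all t ∈ [δ, t*]. Then E(t) ≤ (2/1.4) · C_α · t² = (10/7) · C_α · t² for all t ∈ [δ, t*]. -/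
/-!
Let `S` be the largest value of `E t / t ^ n` on `[δ, T]` (or `0`, if that is larger); it is
attained since `E` is continuous and `t ≥ δ > 0`. Inserting `E s ≤ S s ^ n` into the integral
inequality gives `E t ≤ (C + (c / n) S) t ^ n`, and at the maximiser this reads
`S ≤ C + (c / n) S`. As `c < n`, this forces `S ≤ n C / (n - c)`.
-/

open MeasureTheory Set

theorem integral_div_mul_mul_pow {δ t : ℝ} (hδ : 0 < δ) (ht : 0 < t) {n : ℕ} (hn : 0 < n)
    (c A : ℝ) :
    ∫ s in δ..t, c / s * (A * s ^ n) = c * A / n * (t ^ n - δ ^ n) := by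
  have hpos : ∀ s ∈ uIcc δ t, 0 < s := fun s hs =>
    lt_of_lt_of_le (lt_min hδ ht) hs.1
  obtain ⟨m, rfl⟩ := Nat.exists_eq_succ_of_ne_zero hn.ne'
  calc ∫ s in δ..t, c / s * (A * s ^ (m + 1))
      = ∫ s in δ..t, c * A * s ^ m := by
        refine intervalIntegral.integral_congr fun s hs => ?_
        have := (hpos s hs).ne'
        field_simp
        ring
    _ = c * A / (m + 1 : ℕ) * (t ^ (m + 1) - δ ^ (m + 1)) := by
        rw [intervalIntegral.integral_const_mul, integral_pow]
        push_cast
        ring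

section

variable {δ T c C : ℝ} {n : ℕ} {E : ℝ → ℝ}

theorem le_add_div_mul_mul_pow_of_le_mul_pow (hδ : 0 < δ) (hc : 0 ≤ c) (hn : 0 < n)
    (hEcont : ContinuousOn E (Icc δ T))
    (hineq : ∀ t ∈ Icc δ T, E t ≤ C * t ^ n + ∫ s in δ..t, c / s * E s)
    {A : ℝ} (hA : 0 ≤ A) (hEA : ∀ t ∈ Icc δ T, E t ≤ A * t ^ n) :
    ∀ t ∈ Icc δ T, E t ≤ (C + c / n * A) * t ^ n := by
  intro t ht
  have ht₀ : 0 < t := hδ.trans_le ht.1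
  have hsub : Icc δ t ⊆ Icc δ T := Icc_subset_Icc_right ht.2
  have hpos : ∀ s ∈ Icc δ t, 0 < s := fun s hs => hδ.trans_le hs.1
  have hkernel : ContinuousOn (fun s => c / s) (Icc δ t) :=
    continuousOn_const.div continuousOn_id fun s hs => (hpos s hs).ne'
  have hmono : ∫ s in δ..t, c / s * E s ≤ ∫ s in δ..t, c / s * (A * s ^ n) := by
    refine intervalIntegral.integral_mono_on ht.1 ?_ ?_ fun s hs =>
      mul_le_mul_of_nonneg_left (hEA s (hsub hs)) (div_nonneg hc (hpos s hs).le)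
    · exact (hkernel.mul (hEcont.mono hsub)).intervalIntegrable_of_Icc ht.1
    · exact (hkernel.mul (continuousOn_const.mul (continuousOn_pow n))).intervalIntegrable_of_Icc
        ht.1
  rw [integral_div_mul_mul_pow hδ ht₀ hn] at hmono
  calc E t ≤ C * t ^ n + c * A / n * (t ^ n - δ ^ n) := (hineq t ht).trans (by linarith)
    _ = (C + c / n * A) * t ^ n - c * A / n * δ ^ n := by ring
    _ ≤ (C + c / n * A) * t ^ n := sub_le_self _ (by positivity)

theorem exists_isMaxOn_div_pow (hδ : 0 < δ) (hEcont : ContinuousOn E (Icc δ T))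
    (hne : (Icc δ T).Nonempty) :
    ∃ t₀ ∈ Icc δ T, ∀ t ∈ Icc δ T, E t / t ^ n ≤ E t₀ / t₀ ^ n :=
  isCompact_Icc.exists_isMaxOn hne <|
    hEcont.div (continuousOn_pow n) fun _ ht => pow_ne_zero n (hδ.trans_le ht.1).ne'

theorem le_mul_pow_of_le_add_integral_div_mul (hδ : 0 < δ) (hc : 0 ≤ c) (hcn : c < n)
    (hC : 0 ≤ C) (hEcont : ContinuousOn E (Icc δ T))
    (hineq : ∀ t ∈ Icc δ T, E t ≤ C * t ^ n + ∫ s in δ..t, c / s * E s) :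
    ∀ t ∈ Icc δ T, E t ≤ n * C / (n - c) * t ^ n := by
  intro t ht
  have hn : 0 < n := by exact_mod_cast hc.trans_lt hcn
  have hpow : ∀ s ∈ Icc δ T, 0 < s ^ n := fun s hs => pow_pos (hδ.trans_le hs.1) n
  obtain ⟨t₀, ht₀, hmax⟩ := exists_isMaxOn_div_pow (n := n) hδ hEcont ⟨t, ht⟩
  set S := max (E t₀ / t₀ ^ n) 0
  have hES : ∀ s ∈ Icc δ T, E s ≤ S * s ^ n := fun s hs =>
    (div_le_iff₀ (hpow s hs)).mp ((hmax s hs).trans (le_max_left _ _))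
  have hstep := le_add_div_mul_mul_pow_of_le_mul_pow hδ hc hn hEcont hineq (le_max_right _ _) hES
  have hS : S ≤ C + c / n * S :=
    max_le ((div_le_iff₀ (hpow t₀ ht₀)).mpr (hstep t₀ ht₀)) (by positivity)
  have hSbound : S ≤ n * C / (n - c) := by
    have hn₀ : (0 : ℝ) < n := by exact_mod_cast hn
    rw [le_div_iff₀ (sub_pos.mpr hcn)]
    calc S * (n - c) = S * n - c * S := by ring
      _ ≤ (C + c / n * S) * n - c * S := by gcongr
      _ = n * C := by field_simp; ring
  exact (hES t ht).trans (mul_le_mul_of_nonneg_right hSbound (hpow t ht).le)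

end

theorem gronwall_t_squared_general
    (δ tstar : ℝ) (hδ : 0 < δ)
    (E : ℝ → ℝ)
    (hEcont : ContinuousOn E (Set.Icc δ tstar))
    (Cα : ℝ) (hCα : 0 ≤ Cα)
    (hineq : ∀ t ∈ Set.Icc δ tstar,
      E t ≤ Cα * t ^ 2 + ∫ s in δ..t, (0.6 / s) * E s) :
    ∀ t ∈ Set.Icc δ tstar, E t ≤ (10 / 7) * Cα * t ^ 2 := by
  intro t ht
  have h := le_mul_pow_of_le_add_integral_div_mul (n := 2) hδ (by norm_num) (by norm_num) hCα
    hEcont hineq t ht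
  convert h using 2
  norm_num
  ring

/-- Gronwall estimate with kernel `0.6/s` and inhomogeneity `Cα·t²`:
if `E` is continuous, nonnegative on `[δ, t*]` and
`E(t) ≤ Cα·t² + ∫_δ^t (0.6/s)·E(s) ds`, then `E(t) ≤ (10/7)·Cα·t²` on `[δ, t*]`. -/
theorem gronwall_t_squared
    (δ tstar : ℝ) (hδ : 0 < δ) (hδt : δ ≤ tstar)
    (E : ℝ → ℝ)
    (hEcont : ContinuousOn E (Set.Icc δ tstar))
    (hEnonneg : ∀ t ∈ Set.Icc δ tstar, 0 ≤ E t)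
    (Cα : ℝ) (hCα : 0 ≤ Cα)
    (hineq : ∀ t ∈ Set.Icc δ tstar,
      E t ≤ Cα * t ^ 2 + ∫ s in δ..t, (0.6 / s) * E s) :
    ∀ t ∈ Set.Icc δ tstar, E t ≤ (10 / 7) * Cα * t ^ 2 :=
  gronwall_t_squared_general δ tstar hδ E hEcont Cα hCα hineq
end

section
/- Let γ > 1, δ ∈ (0, 1/2), and A ∈ ℝ. There exist ε₀ > 0 and C > 0 depending only on (γ, δ) such that the following holds for every 0 < ε ≤ ε₀ and every T > 1. Suppose p, q, s : [1, T] → ℝ are continuous with |p(t) − 1/t| ≤ ε·ln t / t², |q(t)| ≤ ε / t^{3−δ}, |s(t)| ≤ ε / t^{2−δ} for all t ∈ [1,T], and suppose y, k : [1, T] → ℝ are C¹ functions with y(1) = A, k(1) = 0, satisfying y'(t) = −p(t)·y(t) + q(t)·k(t) and k'(t) = −((γ+1)/2)·y(t) + s(t)·k(t) on [1,T]. Then for all t ∈ [1, T]: |y(t) − A/t| ≤ C·ε·|A|/t and |k(t) + ((γ+1)/2)·A·ln t| ≤ C·ε·|A|·ln t. -/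
/-!
With the integrating factors `P = ∫₁ᵗ p` and `Q = -∫₁ᵗ s` the system becomes the pair of integral
equations `e^P y = A + ∫₁ᵗ e^P q k` and `e^Q k = -c ∫₁ᵗ e^Q y`, where `c = (γ + 1) / 2`. The bounds
on the coefficients make `P - log t` and `Q` of size `O(ε)`, because `log τ / τ^(2-δ)` and
`τ^-(2-δ)` are integrable on `[1, ∞)`. Let `M` be the maximum of `|t y - A|` on `[1, T]`. The
second equation gives `|k| ≲ c (|A| + M) log t`; inserted into the first, whose kernel
`e^P q ≈ τ^-(2-δ)` is integrable against `log τ`, this gives `M ≲ ε |A| + c ε (|A| + M)`, hence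
`M ≲ c ε |A|` once `c ε` is small. Feeding this back into the second equation gives the
logarithmic estimate for `k`.
-/

open Real Set MeasureTheory intervalIntegral

theorem ContinuousOn.intervalIntegrable_of_mem_Icc {f : ℝ → ℝ} {a b t : ℝ}
    (hf : ContinuousOn f (Icc a b)) (ht : t ∈ Icc a b) : IntervalIntegrable f volume a t :=
  (hf.mono (Icc_subset_Icc_right ht.2)).intervalIntegrable_of_Icc ht.1

theorem integral_eq_sub_of_hasDerivWithinAt_Icc {F F' : ℝ → ℝ} {a b t : ℝ}
    (hF : ∀ x ∈ Icc a b, HasDerivWithinAt F (F' x) (Icc a b) x)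
    (hF' : ContinuousOn F' (Icc a b)) (ht : t ∈ Icc a b) :
    ∫ x in a..t, F' x = F t - F a :=
  integral_eq_sub_of_hasDerivAt_of_le ht.1
    (fun x hx => ((hF x ⟨hx.1, hx.2.trans ht.2⟩).continuousWithinAt).mono
      (Icc_subset_Icc_right ht.2))
    (fun x hx => (hF x ⟨hx.1.le, hx.2.le.trans ht.2⟩).hasDerivAt
      (Icc_mem_nhds hx.1 (hx.2.trans_le ht.2)))
    (hF'.intervalIntegrable_of_mem_Icc ht)

theorem hasDerivWithinAt_integral_Icc {f : ℝ → ℝ} {a b x : ℝ}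
    (hf : ContinuousOn f (Icc a b)) (hx : x ∈ Icc a b) :
    HasDerivWithinAt (fun u => ∫ t in a..u, f t) (f x) (Icc a b) x :=
  have : Fact (x ∈ Icc a b) := ⟨hx⟩
  integral_hasDerivWithinAt_right (hf.intervalIntegrable_of_mem_Icc hx)
    ⟨Icc a b, self_mem_nhdsWithin, hf.aestronglyMeasurable measurableSet_Icc⟩ (hf x hx)

theorem exp_integral_mul_eq_of_hasDerivWithinAt {α f u : ℝ → ℝ} {a b : ℝ}
    (hα : ContinuousOn α (Icc a b)) (hf : ContinuousOn f (Icc a b))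
    (hu : ∀ x ∈ Icc a b, HasDerivWithinAt u (-α x * u x + f x) (Icc a b) x) :
    ∀ t ∈ Icc a b,
      exp (∫ x in a..t, α x) * u t = u a + ∫ x in a..t, exp (∫ τ in a..x, α τ) * f x := by
  intro t ht
  have hA (x) (hx : x ∈ Icc a b) := hasDerivWithinAt_integral_Icc hα hx
  have hF' : ContinuousOn (fun x => exp (∫ τ in a..x, α τ) * f x) (Icc a b) :=
    (continuous_exp.comp_continuousOn fun x hx => (hA x hx).continuousWithinAt).mul hf
  rw [integral_eq_sub_of_hasDerivWithinAt_Icc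
    (fun x hx => ((hA x hx).exp.mul (hu x hx)).congr_deriv (by ring)) hF' ht]
  simp

theorem abs_integral_le_mul_log {f : ℝ → ℝ} {K t : ℝ} (ht : 1 ≤ t)
    (hfK : ∀ τ ∈ Ioc 1 t, |f τ| ≤ K / τ) : |∫ τ in 1..t, f τ| ≤ K * log t := by
  have h0 : (0 : ℝ) ∉ uIcc 1 t := notMem_uIcc_of_lt one_pos (by linarith)
  have hlog : log t = ∫ τ in 1..t, τ⁻¹ := by rw [integral_inv h0, div_one]
  rw [hlog, ← intervalIntegral.integral_const_mul, ← Real.norm_eq_abs]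
  exact norm_integral_le_of_norm_le ht
    (.of_forall fun τ hτ => (hfK τ hτ).trans_eq (div_eq_mul_inv _ _))
    ((intervalIntegrable_inv (fun x hx => ne_of_mem_of_not_mem hx h0) continuousOn_id).const_mul K)

theorem abs_integral_le_div_of_abs_le_rpow {f : ℝ → ℝ} {K r t : ℝ} (ht : 1 ≤ t) (hr : 1 < r)
    (hK : 0 ≤ K) (hfK : ∀ τ ∈ Ioc 1 t, |f τ| ≤ K * τ ^ (-r)) :
    |∫ τ in 1..t, f τ| ≤ K / (r - 1) := by
  have h0 : (0 : ℝ) ∉ uIcc 1 t := notMem_uIcc_of_lt one_pos (by linarith)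
  have hpow : 0 < t ^ (-r + 1) := rpow_pos_of_pos (by linarith) _
  calc |∫ τ in 1..t, f τ| ≤ ∫ τ in 1..t, K * τ ^ (-r) := by
        rw [← Real.norm_eq_abs]
        exact norm_integral_le_of_norm_le ht (.of_forall hfK)
          ((intervalIntegrable_rpow (Or.inr h0)).const_mul K)
    _ = K * (1 - t ^ (-r + 1)) / (r - 1) := by
        rw [intervalIntegral.integral_const_mul, integral_rpow (Or.inr ⟨by linarith, h0⟩),
          one_rpow, show -r + 1 = -(r - 1) by ring, div_neg]
        ring
    _ ≤ K / (r - 1) := div_le_div_of_nonneg_right (by nlinarith) (by linarith)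

theorem log_div_rpow_le {τ r : ℝ} (hτ : 1 ≤ τ) (hr : 3 / 2 ≤ r) :
    log τ / τ ^ r ≤ 4 * τ ^ (-(5 / 4) : ℝ) := by
  have hτ0 : 0 < τ := by linarith
  have hlog : log τ ≤ 4 * τ ^ (1 / 4 : ℝ) := by
    linarith [log_le_rpow_div hτ0.le (by norm_num : (0 : ℝ) < 1 / 4)]
  calc log τ / τ ^ r ≤ 4 * τ ^ (1 / 4 : ℝ) / τ ^ r := by gcongr
    _ = 4 * τ ^ (1 / 4 - r) := by rw [rpow_sub hτ0]; ring
    _ ≤ 4 * τ ^ (-(5 / 4) : ℝ) := by gcongr; linarith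

theorem exp_le_three_of_le_one {x : ℝ} (hx : x ≤ 1) : exp x ≤ 3 :=
  (exp_le_exp.2 hx).trans (exp_one_lt_d9.trans (by norm_num)).le

theorem abs_sub_div_le_div_iff {t y A B : ℝ} (ht : 0 < t) :
    |y - A / t| ≤ B / t ↔ |t * y - A| ≤ B := by
  rw [show y - A / t = (t * y - A) / t by field_simp, abs_div, abs_of_pos ht,
    div_le_div_iff_of_pos_right ht]

theorem abs_mul_sub_le_of_exp_mul_eq {t P y A J η : ℝ} (ht : 0 < t) (hη : η ≤ 1)
    (hP : |P - log t| ≤ η) (hy : exp P * y = A + J) :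
    |t * y - A| ≤ 2 * η * |A| + 3 * |J| := by
  rw [abs_sub_comm] at hP
  have hw : |log t - P| ≤ 1 := hP.trans hη
  have hty : t * y - A = (exp (log t - P) - 1) * A + exp (log t - P) * J := by
    rw [exp_sub, exp_log ht, ← sub_eq_zero, ← mul_left_cancel_iff_of_pos (exp_pos P)]
    field_simp
    linear_combination t * hy
  have h1 : |exp (log t - P) - 1| ≤ 2 * η := by linarith [abs_exp_sub_one_le hw]
  have h3 := exp_le_three_of_le_one (le_of_abs_le hw)
  rw [hty]
  calc _ ≤ |exp (log t - P) - 1| * |A| + exp (log t - P) * |J| := by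
        rw [← abs_mul, ← abs_of_pos (exp_pos (log t - P)), ← abs_mul, abs_exp]
        exact abs_add_le _ _
    _ ≤ 2 * η * |A| + 3 * |J| := by gcongr

theorem abs_add_le_of_abs_exp_mul_add_le {Q k L X η : ℝ} (hη : η ≤ 1) (hQ : |Q| ≤ η)
    (h : |exp Q * k + L| ≤ X) : |k + L| ≤ 3 * X + 2 * η * |L| := by
  have hQ' : |-Q| ≤ 1 := (abs_neg Q).trans_le (hQ.trans hη)
  have hkL : k + L = exp (-Q) * (exp Q * k + L) - (exp (-Q) - 1) * L := by
    rw [exp_neg]; field_simp; ring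
  have h1 : |exp (-Q) - 1| ≤ 2 * η := by linarith [abs_exp_sub_one_le hQ', abs_neg Q]
  have h3 := exp_le_three_of_le_one (le_of_abs_le hQ')
  rw [hkL]
  calc _ ≤ exp (-Q) * |exp Q * k + L| + |exp (-Q) - 1| * |L| := by
        rw [← abs_mul, ← abs_of_pos (exp_pos (-Q)), ← abs_mul, abs_exp]
        exact abs_sub _ _
    _ ≤ 3 * X + 2 * η * |L| := by gcongr

theorem abs_integral_le_of_abs_le_div_rpow {s : ℝ → ℝ} {ε r T : ℝ} (hε : 0 ≤ ε) (hr : 1 < r)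
    (hs : ∀ t ∈ Icc 1 T, |s t| ≤ ε / t ^ r) :
    ∀ t ∈ Icc 1 T, |∫ τ in 1..t, s τ| ≤ ε / (r - 1) := fun t ht =>
  abs_integral_le_div_of_abs_le_rpow ht.1 hr hε fun τ hτ =>
    (hs τ ⟨hτ.1.le, hτ.2.trans ht.2⟩).trans_eq <| by
      rw [rpow_neg (by linarith [hτ.1]), div_eq_mul_inv]

theorem abs_integral_sub_log_le {p : ℝ → ℝ} {ε T : ℝ} (hε : 0 ≤ ε)
    (hp : ContinuousOn p (Icc 1 T)) (hpb : ∀ t ∈ Icc 1 T, |p t - 1 / t| ≤ ε * log t / t ^ 2) :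
    ∀ t ∈ Icc 1 T, |(∫ τ in 1..t, p τ) - log t| ≤ 16 * ε := by
  intro t ht
  have h0 : (0 : ℝ) ∉ uIcc 1 t := notMem_uIcc_of_lt one_pos (by linarith [ht.1])
  have hlog : log t = ∫ τ in 1..t, 1 / τ := by rw [integral_one_div h0, div_one]
  rw [hlog, ← integral_sub (hp.intervalIntegrable_of_mem_Icc ht)
    (intervalIntegrable_one_div (fun x hx => ne_of_mem_of_not_mem hx h0) continuousOn_id)]
  refine (abs_integral_le_div_of_abs_le_rpow ht.1 (by norm_num : (1 : ℝ) < 5 / 4)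
    (by positivity : 0 ≤ 4 * ε) fun τ hτ => ?_).trans_eq (by ring)
  calc |p τ - 1 / τ| ≤ ε * (log τ / τ ^ (2 : ℝ)) := by
        rw [rpow_two, ← mul_div_assoc]; exact hpb τ ⟨hτ.1.le, hτ.2.trans ht.2⟩
    _ ≤ ε * (4 * τ ^ (-(5 / 4) : ℝ)) := by gcongr; exact log_div_rpow_le hτ.1.le (by norm_num)
    _ = 4 * ε * τ ^ (-(5 / 4) : ℝ) := by ring

theorem abs_integral_exp_mul_mul_le {P q k : ℝ → ℝ} {T ε δ η K : ℝ} (hε : 0 ≤ ε)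
    (hδ : δ ≤ 1 / 2) (hη : η ≤ 1) (hK : 0 ≤ K)
    (hP : ∀ t ∈ Icc 1 T, |P t - log t| ≤ η) (hq : ∀ t ∈ Icc 1 T, |q t| ≤ ε / t ^ (3 - δ))
    (hk : ∀ t ∈ Icc 1 T, |k t| ≤ K * log t) :
    ∀ t ∈ Icc 1 T, |∫ τ in 1..t, exp (P τ) * (q τ * k τ)| ≤ 48 * ε * K := by
  intro t ht
  refine (abs_integral_le_div_of_abs_le_rpow ht.1 (by norm_num : (1 : ℝ) < 5 / 4)
    (by positivity : 0 ≤ 12 * ε * K) fun τ hτ => ?_).trans_eq (by ring)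
  have hτ' : τ ∈ Icc 1 T := ⟨hτ.1.le, hτ.2.trans ht.2⟩
  have hτ0 : 0 < τ := by linarith [hτ.1]
  have hexp : exp (P τ) ≤ 3 * τ := by
    rw [show P τ = (P τ - log τ) + log τ by ring, exp_add, exp_log hτ0]
    gcongr
    exact exp_le_three_of_le_one (le_of_abs_le ((hP τ hτ').trans hη))
  have hpow : τ / τ ^ (3 - δ) = 1 / τ ^ (2 - δ) := by
    rw [show 2 - δ = 3 - δ - 1 by ring, rpow_sub_one hτ0.ne']
    field_simp
  calc |exp (P τ) * (q τ * k τ)| ≤ 3 * τ * (ε / τ ^ (3 - δ) * (K * log τ)) := by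
        rw [abs_mul, abs_mul, abs_exp]
        gcongr
        exacts [hq τ hτ', hk τ hτ']
    _ = 3 * ε * K * (log τ / τ ^ (2 - δ)) := by
        rw [div_eq_mul_one_div (log τ), ← hpow]; ring
    _ ≤ 3 * ε * K * (4 * τ ^ (-(5 / 4) : ℝ)) := by
        gcongr; exact log_div_rpow_le hτ.1.le (by linarith)
    _ = 12 * ε * K * τ ^ (-(5 / 4) : ℝ) := by ring

theorem abs_add_mul_log_le_of_exp_mul_eq_integral {Q y k : ℝ → ℝ} {T c η A B : ℝ} (hc : 0 ≤ c)
    (hη : η ≤ 1) (hQ : ContinuousOn Q (Icc 1 T)) (hy : ContinuousOn y (Icc 1 T))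
    (hQb : ∀ t ∈ Icc 1 T, |Q t| ≤ η) (hyb : ∀ t ∈ Icc 1 T, |y t - A / t| ≤ B / t)
    (hk : ∀ t ∈ Icc 1 T, exp (Q t) * k t = ∫ τ in 1..t, exp (Q τ) * (-c * y τ)) :
    ∀ t ∈ Icc 1 T, |k t + c * A * log t| ≤ c * (9 * B + 8 * η * |A|) * log t := by
  intro t ht
  have h0 : (0 : ℝ) ∉ uIcc 1 t := notMem_uIcc_of_lt one_pos (by linarith [ht.1])
  have hI : exp (Q t) * k t + c * A * log t
      = ∫ τ in 1..t, -c * (exp (Q τ) * y τ - A / τ) := by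
    have hyQ : IntervalIntegrable (fun τ => exp (Q τ) * (-c * y τ)) volume 1 t :=
      ((continuous_exp.comp_continuousOn hQ).mul
        (continuousOn_const.mul hy)).intervalIntegrable_of_mem_Icc ht
    have hinv : IntervalIntegrable (fun τ => c * A * τ⁻¹) volume 1 t :=
      (intervalIntegrable_inv (fun x hx => ne_of_mem_of_not_mem hx h0) continuousOn_id).const_mul _
    have hlog : log t = ∫ τ in 1..t, τ⁻¹ := by rw [integral_inv h0, div_one]
    rw [hk t ht, hlog, ← intervalIntegral.integral_const_mul, ← integral_add hyQ hinv]
    exact integral_congr fun τ _ => by ring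
  have hIb : |exp (Q t) * k t + c * A * log t| ≤ c * (3 * B + 2 * η * |A|) * log t := by
    rw [hI]
    refine abs_integral_le_mul_log ht.1 fun τ hτ => ?_
    have hτ' : τ ∈ Icc 1 T := ⟨hτ.1.le, hτ.2.trans ht.2⟩
    have hτ0 : 0 < τ := by linarith [hτ.1]
    have hQτ : |Q τ| ≤ 1 := (hQb τ hτ').trans hη
    calc |-c * (exp (Q τ) * y τ - A / τ)|
        = c * |exp (Q τ) * (y τ - A / τ) + (exp (Q τ) - 1) * A / τ| := by
          rw [abs_mul, abs_neg, abs_of_nonneg hc]; ring_nf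
      _ ≤ c * (|exp (Q τ) * (y τ - A / τ)| + |(exp (Q τ) - 1) * A / τ|) := by
          gcongr; exact abs_add_le _ _
      _ = c * (exp (Q τ) * |y τ - A / τ| + |exp (Q τ) - 1| * |A| / τ) := by
          rw [abs_mul, abs_div, abs_mul, abs_exp, abs_of_pos hτ0]
      _ ≤ c * (3 * (B / τ) + 2 * η * |A| / τ) := by
          gcongr
          · exact exp_le_three_of_le_one (le_of_abs_le hQτ)
          · exact hyb τ hτ'
          · linarith [abs_exp_sub_one_le hQτ, hQb τ hτ']
      _ = c * (3 * B + 2 * η * |A|) / τ := by ring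
  calc |k t + c * A * log t|
        ≤ 3 * (c * (3 * B + 2 * η * |A|) * log t) + 2 * η * |c * A * log t| :=
        abs_add_le_of_abs_exp_mul_add_le hη (hQb t ht) hIb
    _ = c * (9 * B + 8 * η * |A|) * log t := by
        rw [abs_mul, abs_mul, abs_of_nonneg hc, abs_of_nonneg (log_nonneg ht.1)]; ring

theorem abs_sub_div_le_of_exp_mul_eq_integral {P Q q y k : ℝ → ℝ} {T ε c δ A : ℝ} (hc : 1 ≤ c)
    (hε : 0 ≤ ε) (hεc : 2592 * c * ε ≤ 1) (hδ : δ ≤ 1 / 2)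
    (hQ : ContinuousOn Q (Icc 1 T)) (hy : ContinuousOn y (Icc 1 T))
    (hPb : ∀ t ∈ Icc 1 T, |P t - log t| ≤ 16 * ε) (hQb : ∀ t ∈ Icc 1 T, |Q t| ≤ 16 * ε)
    (hqb : ∀ t ∈ Icc 1 T, |q t| ≤ ε / t ^ (3 - δ))
    (hyk : ∀ t ∈ Icc 1 T, exp (P t) * y t = A + ∫ τ in 1..t, exp (P τ) * (q τ * k τ))
    (hky : ∀ t ∈ Icc 1 T, exp (Q t) * k t = ∫ τ in 1..t, exp (Q τ) * (-c * y τ)) :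
    ∀ t ∈ Icc 1 T, |y t - A / t| ≤ 2656 * c * ε * |A| / t := by
  intro t ht
  have h16 : 16 * ε ≤ 1 := by nlinarith
  obtain ⟨t₀, ht₀, hmax⟩ := isCompact_Icc.exists_isMaxOn ⟨t, ht⟩
    ((continuousOn_id.mul hy).sub continuousOn_const).abs
  set M := |t₀ * y t₀ - A|
  have hM0 : 0 ≤ M := abs_nonneg _
  have hpos {τ} (hτ : τ ∈ Icc (1 : ℝ) T) : 0 < τ := by linarith [hτ.1]
  have hyM : ∀ τ ∈ Icc 1 T, |y τ - A / τ| ≤ M / τ := fun τ hτ =>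
    (abs_sub_div_le_div_iff (hpos hτ)).2 (hmax hτ)
  have hkM : ∀ τ ∈ Icc 1 T, |k τ| ≤ 9 * c * (|A| + M) * log τ := by
    intro τ hτ
    have hkA := abs_add_mul_log_le_of_exp_mul_eq_integral (by linarith) h16 hQ hy hQb
      hyM hky τ hτ
    have hlog := log_nonneg hτ.1
    have hL : |c * A * log τ| = c * |A| * log τ := by
      rw [abs_mul, abs_mul, abs_of_nonneg (by linarith : 0 ≤ c), abs_of_nonneg hlog]
    calc |k τ| = |(k τ + c * A * log τ) - c * A * log τ| := by ring_nf
      _ ≤ |k τ + c * A * log τ| + c * |A| * log τ := hL ▸ abs_sub _ _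
      _ ≤ 9 * c * (|A| + M) * log τ := by
          nlinarith [mul_nonneg (mul_nonneg (by linarith : 0 ≤ c) hlog)
            (mul_nonneg (abs_nonneg A) (by linarith : 0 ≤ 8 - 128 * ε))]
  have hJ := abs_integral_exp_mul_mul_le hε hδ h16 (by positivity) hPb hqb hkM t₀ ht₀
  have hM := abs_mul_sub_le_of_exp_mul_eq (hpos ht₀) h16 (hPb t₀ ht₀) (hyk t₀ ht₀)
  -- `hM` and `hJ` give `M ≤ 32ε|A| + 1296cε(|A| + M)`, and `1296cε ≤ 1/2` absorbs the `M`.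
  have hMb : M ≤ 2656 * c * ε * |A| := by
    nlinarith [mul_le_mul_of_nonneg_right hεc hM0,
      mul_nonneg (mul_nonneg (sub_nonneg.2 hc) hε) (abs_nonneg A)]
  exact (hyM t ht).trans (div_le_div_of_nonneg_right hMb (hpos ht).le)

theorem perturbed_boundary_ode_stability_general
    (γ δ : ℝ) (hγ : 1 < γ) (hδ : δ < 1 / 2) :
    ∃ ε₀ C : ℝ, 0 < ε₀ ∧ 0 < C ∧
      ∀ (A ε T : ℝ), 0 < ε → ε ≤ ε₀ → 1 < T →
      ∀ p q s y k : ℝ → ℝ,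
        ContinuousOn p (Set.Icc 1 T) →
        ContinuousOn q (Set.Icc 1 T) →
        ContinuousOn s (Set.Icc 1 T) →
        (∀ t ∈ Set.Icc (1 : ℝ) T, |p t - 1 / t| ≤ ε * Real.log t / t ^ 2) →
        (∀ t ∈ Set.Icc (1 : ℝ) T, |q t| ≤ ε / t ^ (3 - δ)) →
        (∀ t ∈ Set.Icc (1 : ℝ) T, |s t| ≤ ε / t ^ (2 - δ)) →
        ContDiffOn ℝ 1 y (Set.Icc 1 T) →
        ContDiffOn ℝ 1 k (Set.Icc 1 T) →
        y 1 = A → k 1 = 0 →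
        (∀ t ∈ Set.Icc (1 : ℝ) T,
          HasDerivWithinAt y (-(p t) * y t + q t * k t) (Set.Icc 1 T) t ∧
          HasDerivWithinAt k (-((γ + 1) / 2) * y t + s t * k t) (Set.Icc 1 T) t) →
        ∀ t ∈ Set.Icc (1 : ℝ) T,
          |y t - A / t| ≤ C * ε * |A| / t ∧
          |k t + ((γ + 1) / 2) * A * Real.log t| ≤ C * ε * |A| * Real.log t := by
  set c := (γ + 1) / 2 with hc_def
  have hc : 1 ≤ c := by linarith
  refine ⟨1 / (2592 * c), 24032 * c ^ 2, by positivity, by positivity, ?_⟩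
  intro A ε T hε hεε₀ _ p q s y k hp hq hs hpb hqb hsb _ _ hy1 hk1 hsys t ht
  have hεc : 2592 * c * ε ≤ 1 := by rwa [le_div_iff₀ (by positivity), mul_comm] at hεε₀
  have hy : ContinuousOn y (Icc 1 T) := fun x hx => (hsys x hx).1.continuousWithinAt
  have hyk := exp_integral_mul_eq_of_hasDerivWithinAt (f := fun x => q x * k x) hp
    (hq.mul fun x hx => (hsys x hx).2.continuousWithinAt) fun x hx => (hsys x hx).1
  have hky := exp_integral_mul_eq_of_hasDerivWithinAt (α := fun x => -s x)
    (f := fun x => -c * y x) hs.neg (continuousOn_const.mul hy)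
    fun x hx => (hsys x hx).2.congr_deriv (by ring)
  simp only [hy1, hk1, zero_add] at hyk hky
  have hQb : ∀ t ∈ Icc 1 T, |∫ τ in 1..t, -s τ| ≤ 16 * ε := fun t ht =>
    (abs_integral_le_of_abs_le_div_rpow hε.le (by linarith : 1 < 2 - δ)
      (fun τ hτ => (abs_neg (s τ)).trans_le (hsb τ hτ)) t ht).trans
      (by rw [div_le_iff₀ (by linarith)]; nlinarith)
  have hQ : ContinuousOn (fun t => ∫ τ in 1..t, -s τ) (Icc 1 T) := fun x hx =>
    (hasDerivWithinAt_integral_Icc hs.neg hx).continuousWithinAt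
  have hyb := abs_sub_div_le_of_exp_mul_eq_integral hc hε.le hεc hδ.le hQ hy
    (abs_integral_sub_log_le hε.le hp hpb) hQb hqb hyk hky
  have hkb := abs_add_mul_log_le_of_exp_mul_eq_integral (by linarith) (by nlinarith) hQ hy hQb
    hyb hky t ht
  have hεA : 0 ≤ ε * |A| * (c ^ 2 - c) := by
    have : 0 ≤ c ^ 2 - c := by nlinarith
    positivity
  refine ⟨(hyb t ht).trans ?_, hkb.trans ?_⟩
  · exact div_le_div_of_nonneg_right (by nlinarith) (by linarith [ht.1])
  · nlinarith [mul_nonneg hεA (log_nonneg ht.1)]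

/-- Quantitative stability for the linear boundary ODE system: for
`γ > 1`, `δ ∈ (0, 1/2)` there are `ε₀ > 0` and `C > 0`, depending only on `(γ, δ)`,
such that for every `A`, every `0 < ε ≤ ε₀`, every `T > 1`, and every `C¹` solution
`(y, k)` on `[1, T]` of `y' = -p·y + q·k`, `k' = -((γ+1)/2)·y + s·k` with `y(1) = A`,
`k(1) = 0` and coefficients satisfying `|p(t) - 1/t| ≤ ε·ln t/t²`, `|q(t)| ≤ ε/t^{3-δ}`,
`|s(t)| ≤ ε/t^{2-δ}`, one has `|y(t) - A/t| ≤ Cε|A|/t` and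
`|k(t) + ((γ+1)/2)·A·ln t| ≤ Cε|A|·ln t` on `[1, T]`. -/
theorem perturbed_boundary_ode_stability
    (γ δ : ℝ) (hγ : 1 < γ) (hδ0 : 0 < δ) (hδ : δ < 1 / 2) :
    ∃ ε₀ C : ℝ, 0 < ε₀ ∧ 0 < C ∧
      ∀ (A ε T : ℝ), 0 < ε → ε ≤ ε₀ → 1 < T →
      ∀ p q s y k : ℝ → ℝ,
        ContinuousOn p (Set.Icc 1 T) →
        ContinuousOn q (Set.Icc 1 T) →
        ContinuousOn s (Set.Icc 1 T) →
        (∀ t ∈ Set.Icc (1 : ℝ) T, |p t - 1 / t| ≤ ε * Real.log t / t ^ 2) →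
        (∀ t ∈ Set.Icc (1 : ℝ) T, |q t| ≤ ε / t ^ (3 - δ)) →
        (∀ t ∈ Set.Icc (1 : ℝ) T, |s t| ≤ ε / t ^ (2 - δ)) →
        ContDiffOn ℝ 1 y (Set.Icc 1 T) →
        ContDiffOn ℝ 1 k (Set.Icc 1 T) →
        y 1 = A → k 1 = 0 →
        (∀ t ∈ Set.Icc (1 : ℝ) T,
          HasDerivWithinAt y (-(p t) * y t + q t * k t) (Set.Icc 1 T) t ∧
          HasDerivWithinAt k (-((γ + 1) / 2) * y t + s t * k t) (Set.Icc 1 T) t) →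
        ∀ t ∈ Set.Icc (1 : ℝ) T,
          |y t - A / t| ≤ C * ε * |A| / t ∧
          |k t + ((γ + 1) / 2) * A * Real.log t| ≤ C * ε * |A| * Real.log t :=
  perturbed_boundary_ode_stability_general γ δ hγ hδ
end
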